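/- arXiv:2206.13248 — 12 statements merged into one kernel-verified Lean document; each statement's English description precedes it below -/
import Mathlib

section
/- Let U : ℝ → ℝ be bounded below and satisfy, for every z ∈ ℝ, the small-variance functional equation of the infinitesimal model: U(z) + inf U = inf_{(z₁,z₂) ∈ ℝ²} ( (z − (z₁+z₂)/2)² + U(z₁) + U(z₂) ). Then the function z ↦ U(z) − z² is concave on ℝ. -/
/-- If `U : ℝ → ℝ` is bounded below and satisfies the small-variance functional
equation of the infinitesimal model, then `z ↦ U z - z ^ 2` is concave on `ℝ`. -/
theorem stmt0 (U : ℝ → ℝ) (hbd : BddBelow (Set.range U))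
    (hfe : ∀ z : ℝ, U z + sInf (Set.range U) =
      sInf {v : ℝ | ∃ z₁ z₂ : ℝ, v = (z - (z₁ + z₂) / 2) ^ 2 + U z₁ + U z₂}) :
    ConcaveOn ℝ Set.univ (fun z => U z - z ^ 2) := by
  set m := sInf (Set.range U) with hm
  have hmle : ∀ t, m ≤ U t := fun t => csInf_le hbd ⟨t, rfl⟩
  have hbdS : ∀ x : ℝ, BddBelow {v : ℝ | ∃ z₁ z₂ : ℝ,
      v = (x - (z₁ + z₂) / 2) ^ 2 + U z₁ + U z₂} := by
    intro x
    refine ⟨2 * m, ?_⟩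
    rintro v ⟨w₁, w₂, rfl⟩
    nlinarith [hmle w₁, hmle w₂, sq_nonneg (x - (w₁ + w₂) / 2)]
  -- lower bound argument
  constructor
  · exact convex_univ
  intro x _ y _ a b ha hb hab
  simp only [smul_eq_mul]
  set z := a * x + b * y with hz
  have key : a * (U x + m - x ^ 2) + b * (U y + m - y ^ 2) + z ^ 2 ≤ U z + m := by
    rw [hfe z]
    have hne : Set.Nonempty {v : ℝ | ∃ z₁ z₂ : ℝ,
        v = (z - (z₁ + z₂) / 2) ^ 2 + U z₁ + U z₂} :=
      ⟨(z - (0 + 0) / 2) ^ 2 + U 0 + U 0, ⟨0, 0, rfl⟩⟩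
    apply le_csInf hne
    rintro v ⟨z₁, z₂, rfl⟩
    have h1 : U x + m ≤ (x - (z₁ + z₂) / 2) ^ 2 + U z₁ + U z₂ := by
      rw [hfe x]; exact csInf_le (hbdS x) ⟨z₁, z₂, rfl⟩
    have h2 : U y + m ≤ (y - (z₁ + z₂) / 2) ^ 2 + U z₁ + U z₂ := by
      rw [hfe y]; exact csInf_le (hbdS y) ⟨z₁, z₂, rfl⟩
    -- affine-in-z trick
    have h1' : a * (U x + m - x ^ 2) ≤
        a * (((z₁ + z₂) / 2) ^ 2 - 2 * ((z₁ + z₂) / 2) * x + U z₁ + U z₂) := by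
      apply mul_le_mul_of_nonneg_left _ ha; nlinarith [h1]
    have h2' : b * (U y + m - y ^ 2) ≤
        b * (((z₁ + z₂) / 2) ^ 2 - 2 * ((z₁ + z₂) / 2) * y + U z₁ + U z₂) := by
      apply mul_le_mul_of_nonneg_left _ hb; nlinarith [h2]
    have hb' : b = 1 - a := by linarith
    have hid : a * (((z₁ + z₂) / 2) ^ 2 - 2 * ((z₁ + z₂) / 2) * x + U z₁ + U z₂) +
        b * (((z₁ + z₂) / 2) ^ 2 - 2 * ((z₁ + z₂) / 2) * y + U z₁ + U z₂) =
        (z - (z₁ + z₂) / 2) ^ 2 - z ^ 2 + U z₁ + U z₂ := by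
      rw [hz, hb']; ring
    linarith [h1', h2']
  have hmm : a * m + b * m = m := by rw [← add_mul, hab, one_mul]
  nlinarith [key, hmm]
end

section
/- Let V : ℝ → ℝ be a convex function with V(0) = 0 satisfying the functional identity V(y) = y²/4 + 2·V(y/2) for all y ∈ ℝ. Then there exist real numbers a ≤ b such that V(y) = y²/2 + a·y for all y ≤ 0 and V(y) = y²/2 + b·y for all y ≥ 0; moreover a and b are respectively the left and right derivatives of V at 0. -/
/-- A convex function `V : ℝ → ℝ` with `V 0 = 0` satisfying `V y = y²/4 + 2 V(y/2)`
is of the form `y²/2 + a y` on `(-∞,0]` and `y²/2 + b y` on `[0,∞)`, with `a ≤ b`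
the left and right derivatives of `V` at `0`. -/
theorem stmt2 (V : ℝ → ℝ) (hconv : ConvexOn ℝ Set.univ V) (h0 : V 0 = 0)
    (hfe : ∀ y : ℝ, V y = y ^ 2 / 4 + 2 * V (y / 2)) :
    ∃ a b : ℝ, a ≤ b ∧
      (∀ y : ℝ, y ≤ 0 → V y = y ^ 2 / 2 + a * y) ∧
      (∀ y : ℝ, 0 ≤ y → V y = y ^ 2 / 2 + b * y) ∧
      HasDerivWithinAt V a (Set.Iic 0) 0 ∧
      HasDerivWithinAt V b (Set.Ici 0) 0 := by
  -- slope monotonicity from 0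
  have hS : ∀ s t : ℝ, s ≠ 0 → t ≠ 0 → s ≤ t → V s / s ≤ V t / t := by
    intro s t hs ht hst
    have := hconv.secant_mono (a := 0) (x := s) (y := t) trivial trivial trivial hs ht hst
    simpa [h0] using this
  -- c is invariant under halving
  set c : ℝ → ℝ := fun y => V y / y - y / 2 with hc
  have chalf : ∀ y : ℝ, y ≠ 0 → c y = c (y / 2) := by
    intro y hy
    have h2 : (y / 2) ≠ 0 := div_ne_zero hy two_ne_zero
    simp only [hc]
    rw [hfe y]
    field_simp
    ring
  have cpow : ∀ (y : ℝ), y ≠ 0 → ∀ n : ℕ, c y = c (y / 2 ^ n) := by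
    intro y hy n
    induction n with
    | zero => simp
    | succ n ih =>
      rw [ih, chalf _ (div_ne_zero hy (pow_ne_zero n two_ne_zero))]
      congr 1
      rw [pow_succ]
      ring
  -- for u v > 0, c u ≤ c v
  have key : ∀ u v : ℝ, 0 < u → 0 < v → c u ≤ c v := by
    intro u v hu hv
    by_contra h
    push_neg at h
    set ε := (c u - c v) / 2 with hε
    have hεpos : 0 < ε := by simp [hε]; linarith
    obtain ⟨m, hm⟩ := pow_unbounded_of_one_lt (v / ε) (by norm_num : (1:ℝ) < 2)
    obtain ⟨n, hn⟩ := pow_unbounded_of_one_lt (u / (v / 2 ^ m)) (by norm_num : (1:ℝ) < 2)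
    have hpm : (0:ℝ) < 2 ^ m := by positivity
    have hpn : (0:ℝ) < 2 ^ n := by positivity
    have hvm : 0 < v / 2 ^ m := by positivity
    have hun : 0 < u / 2 ^ n := by positivity
    have h1 : u / 2 ^ n ≤ v / 2 ^ m := by
      have hn' : u < 2 ^ n * (v / 2 ^ m) := (div_lt_iff₀ hvm).mp hn
      rw [mul_div_assoc', lt_div_iff₀ hpm] at hn'
      rw [div_le_div_iff₀ hpn hpm]
      nlinarith
    have h2 : V (u / 2 ^ n) / (u / 2 ^ n) ≤ V (v / 2 ^ m) / (v / 2 ^ m) :=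
      hS _ _ hun.ne' hvm.ne' h1
    have h3 : c (u / 2 ^ n) ≤ c (v / 2 ^ m) + (v / 2 ^ m) / 2 := by
      simp only [hc] at *
      linarith [hun.le]
    have h4 : v / 2 ^ m < ε := by
      rw [div_lt_iff₀ hεpos] at hm
      rw [div_lt_iff₀ hpm]
      nlinarith
    rw [← cpow u hu.ne' n, ← cpow v hv.ne' m] at h3
    linarith
  have ceq : ∀ u v : ℝ, 0 < u → 0 < v → c u = c v := fun u v hu hv =>
    le_antisymm (key u v hu hv) (key v u hv hu)
  set b := c 1 with hb
  set a := c (-1) with ha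
  -- negative side: c u = c v for u v < 0
  have keyneg : ∀ u v : ℝ, u < 0 → v < 0 → c u ≤ c v := by
    intro u v hu hv
    by_contra h
    push_neg at h
    set ε := (c u - c v) / 2 with hε
    have hεpos : 0 < ε := by simp [hε]; linarith
    obtain ⟨m, hm⟩ := pow_unbounded_of_one_lt ((-u) / ε) (by norm_num : (1:ℝ) < 2)
    obtain ⟨n, hn⟩ := pow_unbounded_of_one_lt ((-v) / ((-u) / 2 ^ m)) (by norm_num : (1:ℝ) < 2)
    have hpm : (0:ℝ) < 2 ^ m := by positivity
    have hpn : (0:ℝ) < 2 ^ n := by positivity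
    have hum : u / 2 ^ m < 0 := div_neg_of_neg_of_pos hu hpm
    have hvn : v / 2 ^ n < 0 := div_neg_of_neg_of_pos hv hpn
    have h1 : u / 2 ^ m ≤ v / 2 ^ n := by
      have hu' : 0 < -u / 2 ^ m := div_pos (by linarith) hpm
      have hn' : -v < 2 ^ n * (-u / 2 ^ m) := (div_lt_iff₀ hu').mp hn
      rw [mul_div_assoc', lt_div_iff₀ hpm] at hn'
      rw [div_le_div_iff₀ hpm hpn]
      nlinarith
    have h2 : V (u / 2 ^ m) / (u / 2 ^ m) ≤ V (v / 2 ^ n) / (v / 2 ^ n) :=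
      hS _ _ hum.ne hvn.ne h1
    have h3 : c u ≤ c v - (u / 2 ^ m) / 2 := by
      rw [cpow u hu.ne m, cpow v hv.ne n]
      simp only [hc] at *
      linarith [hvn.le]
    have h4 : -(u / 2 ^ m) < ε := by
      rw [div_lt_iff₀ hεpos] at hm
      rw [neg_div'] at *
      rw [div_lt_iff₀ hpm]
      nlinarith
    linarith
  have ceqneg : ∀ u v : ℝ, u < 0 → v < 0 → c u = c v := fun u v hu hv =>
    le_antisymm (keyneg u v hu hv) (keyneg v u hv hu)
  -- V y = y^2/2 + b*y for y > 0
  have hpos : ∀ y : ℝ, 0 ≤ y → V y = y ^ 2 / 2 + b * y := by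
    intro y hy
    rcases eq_or_lt_of_le hy with rfl | hy'
    · simp [h0]
    · have hy0 : y ≠ 0 := hy'.ne'
      have hth := ceq y 1 hy' one_pos
      simp only [hc] at hth
      have h1 : V y / y = b + y / 2 := by
        simp only [hb, hc]; rw [div_one] at hth; linarith
      have h2 : V y = (b + y / 2) * y := by rw [← h1]; field_simp
      rw [h2]; ring
  have hnegg : ∀ y : ℝ, y ≤ 0 → V y = y ^ 2 / 2 + a * y := by
    intro y hy
    rcases eq_or_lt_of_le hy with rfl | hy'
    · simp [h0]
    · have hy0 : y ≠ 0 := hy'.ne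
      have hth := ceqneg y (-1) hy' (by norm_num)
      simp only [hc] at hth
      have h1 : V y / y = a + y / 2 := by
        simp only [ha, hc]; norm_num at hth ⊢; linarith
      have h2 : V y = (a + y / 2) * y := by rw [← h1]; field_simp
      rw [h2]; ring
  -- a ≤ b
  have hab : a ≤ b := by
    by_contra h
    push_neg at h
    set ε := (a - b) / 2 with hε
    have hεpos : 0 < ε := by simp [hε]; linarith
    have hVn := hnegg (-ε) (by linarith)
    have hVp := hpos ε hεpos.le
    have := hS (-ε) ε (by linarith) hεpos.ne' (by linarith)
    rw [hVn, hVp] at this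
    have h1 : (((-ε) ^ 2 / 2 + a * (-ε)) / (-ε)) = -ε/2 + a := by field_simp; ring
    have h2 : ((ε ^ 2 / 2 + b * ε) / ε) = ε/2 + b := by field_simp
    rw [h1, h2] at this
    simp [hε] at this
    linarith
  refine ⟨a, b, hab, hnegg, hpos, ?_, ?_⟩
  · have hg : HasDerivWithinAt (fun y : ℝ => y ^ 2 / 2 + a * y) a (Set.Iic 0) 0 := by
      have : HasDerivAt (fun y : ℝ => y ^ 2 / 2 + a * y) (2 * 0 / 2 + a) 0 := by
        simpa [Pi.add_def] using ((hasDerivAt_pow 2 (0:ℝ)).div_const 2).add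
          ((hasDerivAt_id (0:ℝ)).const_mul a)
      simpa using this.hasDerivWithinAt
    exact hg.congr (fun y hy => hnegg y hy) (by simp [h0])
  · have hg : HasDerivWithinAt (fun y : ℝ => y ^ 2 / 2 + b * y) b (Set.Ici 0) 0 := by
      have : HasDerivAt (fun y : ℝ => y ^ 2 / 2 + b * y) (2 * 0 / 2 + b) 0 := by
        simpa [Pi.add_def] using ((hasDerivAt_pow 2 (0:ℝ)).div_const 2).add
          ((hasDerivAt_id (0:ℝ)).const_mul b)
      simpa using this.hasDerivWithinAt
    exact hg.congr (fun y hy => hpos y hy) (by simp [h0])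
end

section
/- Let U : ℝ → ℝ be continuous and nonnegative, and suppose that for all z, z₁, z₂ ∈ ℝ one has U(z) ≤ (z − (z₁+z₂)/2)² + U(z₁) + U(z₂). If p ≤ q are real numbers with U(p) = 0 and U(q) = 0, then U(z) = 0 for every z ∈ [p, q]. -/
/-- If `U` is continuous, nonnegative, satisfies the one-sided small-variance inequality
of the infinitesimal model, and vanishes at two points `p ≤ q`, then it vanishes on
the whole interval `[p,q]`. -/
theorem stmt4 (U : ℝ → ℝ) (hcont : Continuous U) (hnn : ∀ z : ℝ, 0 ≤ U z)
    (hineq : ∀ z z₁ z₂ : ℝ, U z ≤ (z - (z₁ + z₂) / 2) ^ 2 + U z₁ + U z₂)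
    (p q : ℝ) (hpq : p ≤ q) (hp : U p = 0) (hq : U q = 0) :
    ∀ z ∈ Set.Icc p q, U z = 0 := by
  intro z hz
  -- dyadic zeros
  have hdy : ∀ n : ℕ, ∀ k : ℕ, k ≤ 2 ^ n →
      U (p + (k : ℝ) / 2 ^ n * (q - p)) = 0 := by
    intro n
    induction n with
    | zero =>
      intro k hk
      interval_cases k
      · simpa using hp
      · norm_num; simpa using hq
    | succ n ih =>
      intro k hk
      rcases Nat.even_or_odd k with ⟨m, hm⟩ | ⟨m, hm⟩
      · subst hm
        have hm2 : m ≤ 2 ^ n := by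
          rw [pow_succ] at hk; omega
        have := ih m hm2
        have heq : p + ((m + m : ℕ) : ℝ) / 2 ^ (n + 1) * (q - p)
            = p + (m : ℝ) / 2 ^ n * (q - p) := by
          push_cast
          ring
        rw [heq]
        exact this
      · subst hm
        have hm1 : m + 1 ≤ 2 ^ n := by
          rw [pow_succ] at hk; omega
        have h1 := ih m (by omega)
        have h2 := ih (m + 1) hm1
        set a := p + (m : ℝ) / 2 ^ n * (q - p) with ha
        set b := p + ((m + 1 : ℕ) : ℝ) / 2 ^ n * (q - p) with hb
        have key := hineq (p + ((2 * m + 1 : ℕ) : ℝ) / 2 ^ (n + 1) * (q - p)) a b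
        have hmid : (p + ((2 * m + 1 : ℕ) : ℝ) / 2 ^ (n + 1) * (q - p)) - (a + b) / 2 = 0 := by
          rw [ha, hb]
          push_cast
          field_simp
          ring
        rw [hmid] at key
        simp only [h1, h2] at key
        have := hnn (p + ((2 * m + 1 : ℕ) : ℝ) / 2 ^ (n + 1) * (q - p))
        nlinarith [key]
  rcases eq_or_lt_of_le hpq with heq | hlt
  · subst heq
    have : z = p := le_antisymm hz.2 hz.1
    rw [this, hp]
  · set c := q - p with hc
    have hcpos : 0 < c := by linarith
    set t := (z - p) / c with ht
    have ht0 : 0 ≤ t := div_nonneg (by linarith [hz.1]) hcpos.le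
    have ht1 : t ≤ 1 := by
      rw [ht, div_le_one hcpos]
      linarith [hz.2]
    -- for each n, U z ≤ (c / 2^n)^2
    have hub : ∀ n : ℕ, U z ≤ (c / 2 ^ n) ^ 2 := by
      intro n
      set k := ⌊t * 2 ^ n⌋₊ with hk
      have hpow : (0:ℝ) < 2 ^ n := by positivity
      have hk2 : k ≤ 2 ^ n := by
        have : t * 2 ^ n ≤ 2 ^ n := by nlinarith
        calc (k : ℕ) ≤ ⌊(2:ℝ) ^ n⌋₊ := Nat.floor_le_floor this
          _ = 2 ^ n := by
            rw [show ((2:ℝ) ^ n) = ((2 ^ n : ℕ) : ℝ) by push_cast; ring]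
            exact Nat.floor_natCast _
      set d := p + (k : ℝ) / 2 ^ n * c with hd
      have hUd : U d = 0 := hdy n k hk2
      have hfl : (k : ℝ) ≤ t * 2 ^ n := Nat.floor_le (by positivity)
      have hfu : t * 2 ^ n < k + 1 := Nat.lt_floor_add_one _
      have hzd : z - d = c * (t - (k : ℝ) / 2 ^ n) := by
        rw [hd, ht]
        field_simp
        ring
      have hlow : 0 ≤ t - (k : ℝ) / 2 ^ n := by
        rw [sub_nonneg, div_le_iff₀ hpow]
        exact hfl
      have hhigh : t - (k : ℝ) / 2 ^ n ≤ 1 / 2 ^ n := by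
        rw [sub_le_iff_le_add, ← add_div, le_div_iff₀ hpow]
        linarith
      have hsq : (z - d) ^ 2 ≤ (c / 2 ^ n) ^ 2 := by
        rw [hzd, div_pow, mul_pow]
        have h := pow_le_pow_left₀ hlow hhigh 2
        have h2 : ((1:ℝ) / 2 ^ n) ^ 2 = 1 / (2 ^ n) ^ 2 := by ring
        rw [h2] at h
        have := sq_nonneg c
        calc c ^ 2 * (t - (k:ℝ) / 2 ^ n) ^ 2 ≤ c ^ 2 * (1 / (2 ^ n) ^ 2) := by nlinarith
          _ = c ^ 2 / (2 ^ n) ^ 2 := by ring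
      have key := hineq z d d
      have : z - (d + d) / 2 = z - d := by ring
      rw [this, hUd] at key
      rw [add_zero, add_zero] at key
      exact key.trans hsq
    have hU0 : U z ≤ 0 := by
      have htend : Filter.Tendsto (fun n : ℕ => (c / 2 ^ n) ^ 2) Filter.atTop (nhds 0) := by
        have h1 : Filter.Tendsto (fun n : ℕ => c / 2 ^ n) Filter.atTop (nhds 0) := by
          simpa using tendsto_const_nhds.div_atTop
            (tendsto_pow_atTop_atTop_of_one_lt (by norm_num : (1:ℝ) < 2))
        simpa using h1.pow 2
      exact ge_of_tendsto' htend hub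
    exact le_antisymm hU0 (hnn z)
end

section
/- Let U : ℝ → ℝ be continuous, attain its global minimum at some point, have superlinear growth (U(z)/|z| → +∞ as |z| → +∞), and satisfy for every z ∈ ℝ the small-variance functional equation of the infinitesimal model: U(z) + inf U = inf_{(z₁,z₂) ∈ ℝ²} ( (z − (z₁+z₂)/2)² + U(z₁) + U(z₂) ). Then there exist a constant C ∈ ℝ and real numbers a ≤ b such that for every z ∈ ℝ, U(z) = C + (min(z − a, 0))²/2 + (max(z − b, 0))²/2. -/
open Filter Set Topology

set_option maxHeartbeats 1000000

/-- Characterization of solutions of the small-variance functional equation of the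
infinitesimal model: a continuous function attaining its minimum, with superlinear
growth, satisfying the equation, is a truncated quadratic
`C + (min (z-a) 0)²/2 + (max (z-b) 0)²/2` with `a ≤ b`. -/
theorem stmt5 (U : ℝ → ℝ) (hcont : Continuous U)
    (hmin : ∃ zstar : ℝ, ∀ z : ℝ, U zstar ≤ U z)
    (hgrow : Filter.Tendsto (fun z : ℝ => U z / |z|) (Filter.cocompact ℝ) Filter.atTop)
    (hfe : ∀ z : ℝ, U z + sInf (Set.range U) =
      sInf {v : ℝ | ∃ z₁ z₂ : ℝ, v = (z - (z₁ + z₂) / 2) ^ 2 + U z₁ + U z₂}) :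
    ∃ C a b : ℝ, a ≤ b ∧
      ∀ z : ℝ, U z = C + (min (z - a) 0) ^ 2 / 2 + (max (z - b) 0) ^ 2 / 2 := by
  obtain ⟨z₀, hz₀⟩ := hmin
  set m : ℝ := U z₀ with hm
  -- the infimum of U is m
  have hIm : sInf (Set.range U) = m := by
    apply le_antisymm
    · exact csInf_le ⟨m, by rintro y ⟨z, rfl⟩; exact hz₀ z⟩ ⟨z₀, rfl⟩
    · exact le_csInf ⟨m, z₀, rfl⟩ (by rintro y ⟨z, rfl⟩; exact hz₀ z)
  set V : ℝ → ℝ := fun z => U z - m with hVdef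
  have hVval : ∀ z, V z = U z - m := fun z => rfl
  have hV0 : ∀ z, 0 ≤ V z := fun z => sub_nonneg.2 (hz₀ z)
  have hVz₀ : V z₀ = 0 := by rw [hVval, hm, sub_self]
  have hcontV : Continuous V := hcont.sub continuous_const
  -- superlinear growth of V
  have habs : Tendsto (fun z : ℝ => |z|) (cocompact ℝ) atTop := by
    exact (tendsto_norm_cocompact_atTop (E := ℝ)).congr (fun z => Real.norm_eq_abs z)
  have hgrowV : Tendsto (fun z : ℝ => V z / |z|) (cocompact ℝ) atTop := by
    have hev : ∀ᶠ z : ℝ in cocompact ℝ, (1:ℝ) ≤ |z| := habs.eventually_ge_atTop 1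
    apply tendsto_atTop_mono' _ ?_ (tendsto_atTop_add_const_right _ (-|m|) hgrow)
    filter_upwards [hev] with z hz
    have hzpos : (0:ℝ) < |z| := by linarith
    have h1 : m / |z| ≤ |m| := by
      have h1a : m / |z| ≤ |m| / |z| := (div_le_div_iff_of_pos_right hzpos).mpr (le_abs_self m)
      have h1b : |m| / |z| ≤ |m| := div_le_self (abs_nonneg m) hz
      linarith
    have h2 : V z / |z| = U z / |z| - m / |z| := by rw [hVval, sub_div]
    rw [h2]; linarith
  -- existence of maximizers for p z - V z
  have hZex : ∀ p : ℝ, ∃ w : ℝ, ∀ z : ℝ, p * z - V z ≤ p * w - V w := by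
    intro p
    have hprod : Tendsto (fun z : ℝ => (V z / |z| - |p|) * |z|) (cocompact ℝ) atTop := by
      apply Filter.Tendsto.atTop_mul_atTop₀ _ habs
      simpa [sub_eq_add_neg] using tendsto_atTop_add_const_right _ (-|p|) hgrowV
    have hbot : Tendsto (fun z : ℝ => p * z - V z) (cocompact ℝ) atBot := by
      apply tendsto_atBot_mono' _ ?_ (tendsto_neg_atTop_atBot.comp hprod)
      filter_upwards [habs.eventually_ge_atTop 1] with z hz
      have hz0 : |z| ≠ 0 := by positivity
      have hcan : V z / |z| * |z| = V z := div_mul_cancel₀ _ hz0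
      have hpz : p * z ≤ |p| * |z| := by
        calc p * z ≤ |p * z| := le_abs_self _
          _ = |p| * |z| := abs_mul p z
      have hexp : (V z / |z| - |p|) * |z| = V z - |p| * |z| := by rw [sub_mul, hcan]
      simp only [Function.comp_apply]
      rw [hexp]
      linarith
    exact ((continuous_const.mul continuous_id).sub hcontV).exists_forall_ge hbot
  choose Z hZmax using hZex
  set g : ℝ → ℝ := fun p => p * Z p - V (Z p) with hgdef
  have hgval : ∀ p, g p = p * Z p - V (Z p) := fun p => rfl
  have hg1 : ∀ p z, p * z - V z ≤ g p := fun p z => hZmax p z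
  have hgz₀ : ∀ p, p * z₀ ≤ g p := fun p => by
    have := hg1 p z₀; rw [hVz₀] at this; linarith
  -- functional equation facts
  have hfe' : ∀ z, U z + m
      = sInf {v : ℝ | ∃ z₁ z₂ : ℝ, v = (z - (z₁ + z₂) / 2) ^ 2 + U z₁ + U z₂} := by
    intro z; rw [← hIm]; exact hfe z
  have hSbddl : ∀ z : ℝ,
      BddBelow {v : ℝ | ∃ z₁ z₂ : ℝ, v = (z - (z₁ + z₂) / 2) ^ 2 + U z₁ + U z₂} := by
    intro z
    refine ⟨2 * m, ?_⟩
    rintro v ⟨z1, z2, rfl⟩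
    have := hz₀ z1; have := hz₀ z2
    nlinarith [sq_nonneg (z - (z1 + z2) / 2)]
  have hle : ∀ z z1 z2 : ℝ, V z ≤ (z - (z1 + z2) / 2) ^ 2 + V z1 + V z2 := by
    intro z z1 z2
    have h1 : sInf {v : ℝ | ∃ z₁ z₂ : ℝ, v = (z - (z₁ + z₂) / 2) ^ 2 + U z₁ + U z₂}
        ≤ (z - (z1 + z2) / 2) ^ 2 + U z1 + U z2 := csInf_le (hSbddl z) ⟨z1, z2, rfl⟩
    rw [← hfe' z] at h1
    rw [hVval, hVval, hVval]; linarith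
  have hex : ∀ z ε : ℝ, 0 < ε → ∃ z1 z2 : ℝ,
      (z - (z1 + z2) / 2) ^ 2 + V z1 + V z2 < V z + ε := by
    intro z ε hε
    have hne : {v : ℝ | ∃ z₁ z₂ : ℝ, v = (z - (z₁ + z₂) / 2) ^ 2 + U z₁ + U z₂}.Nonempty :=
      ⟨_, z, z, rfl⟩
    have hlt : sInf {v : ℝ | ∃ z₁ z₂ : ℝ, v = (z - (z₁ + z₂) / 2) ^ 2 + U z₁ + U z₂}
        < U z + m + ε := by rw [← hfe' z]; linarith
    obtain ⟨v, ⟨z1, z2, rfl⟩, hv⟩ := exists_lt_of_csInf_lt hne hlt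
    refine ⟨z1, z2, ?_⟩
    rw [hVval, hVval, hVval]; linarith
  -- key recursion for g
  have hrec : ∀ p : ℝ, g p = p ^ 2 / 4 + 2 * g (p / 2) := by
    intro p
    apply le_antisymm
    · apply le_of_forall_pos_le_add
      intro ε hε
      obtain ⟨z1, z2, hz12⟩ := hex (Z p) ε hε
      have h1 := hg1 (p / 2) z1
      have h2 := hg1 (p / 2) z2
      have hsq := sq_nonneg (p / 2 - (Z p - (z1 + z2) / 2))
      rw [hgval p]
      nlinarith [hz12, h1, h2, hsq]
    · have h1 := hle (p / 2 + Z (p / 2)) (Z (p / 2)) (Z (p / 2))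
      have h2 := hg1 p (p / 2 + Z (p / 2))
      have hsq : (p / 2 + Z (p / 2) - (Z (p / 2) + Z (p / 2)) / 2) ^ 2 = p ^ 2 / 4 := by ring
      rw [hsq] at h1
      rw [hgval (p / 2)]
      linarith
  -- iterated recursion
  have hseq : ∀ p : ℝ, ∀ n : ℕ, g p = p ^ 2 / 2 * (1 - (1 / 2) ^ n) + 2 ^ n * g (p / 2 ^ n) := by
    intro p n
    induction n with
    | zero => simp
    | succ n ih =>
      have h2 : p / 2 ^ (n + 1) = p / 2 ^ n / 2 := by rw [pow_succ]; ring
      rw [h2, ih, hrec (p / 2 ^ n)]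
      have h3 : (2:ℝ) ^ n ≠ 0 := by positivity
      have h4 : (1/2:ℝ) ^ n * 2 ^ n = 1 := by rw [← mul_pow]; norm_num
      field_simp
      linear_combination (-2 * p ^ 2) * h4
  have hval : ∀ p : ℝ, p ≠ 0 → ∀ n : ℕ,
      g (p / 2 ^ n) / (p / 2 ^ n) = g p / p - p / 2 + p / 2 ^ (n + 1) := by
    intro p hp n
    have h3 : (2:ℝ) ^ n ≠ 0 := by positivity
    have e1 : g (p / 2 ^ n) / (p / 2 ^ n) = 2 ^ n * g (p / 2 ^ n) / p := by
      rw [div_div_eq_mul_div]; ring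
    have e2 : (2:ℝ) ^ n * g (p / 2 ^ n) = g p - p ^ 2 / 2 * (1 - (1 / 2) ^ n) := by
      linarith [hseq p n]
    have h4 : (1/2:ℝ) ^ n * 2 ^ n = 1 := by rw [← mul_pow]; norm_num
    rw [e1, e2]
    field_simp
    linear_combination (2 * p ^ 2) * h4
  -- definitions of a and b
  set Sb : Set ℝ := {y | ∃ t : ℝ, 0 < t ∧ y = g t / t} with hSbdef
  have hSbne : Sb.Nonempty := ⟨g 1 / 1, 1, one_pos, rfl⟩
  have hSbbdd : BddBelow Sb := by
    refine ⟨z₀, ?_⟩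
    rintro y ⟨t, ht, rfl⟩
    rw [le_div_iff₀ ht]
    have := hgz₀ t; linarith
  set b : ℝ := sInf Sb with hbdef
  set Sa : Set ℝ := {y | ∃ t : ℝ, t < 0 ∧ y = g t / t} with hSadef
  have hSane : Sa.Nonempty := ⟨g (-1) / (-1), -1, by norm_num, rfl⟩
  have hSabdd : BddAbove Sa := by
    refine ⟨z₀, ?_⟩
    rintro y ⟨t, ht, rfl⟩
    rw [div_le_iff_of_neg ht]
    have := hgz₀ t; linarith
  set a : ℝ := sSup Sa with hadef
  have hz₀b : z₀ ≤ b := by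
    apply le_csInf hSbne
    rintro y ⟨t, ht, rfl⟩
    rw [le_div_iff₀ ht]
    have := hgz₀ t; linarith
  have haz₀ : a ≤ z₀ := by
    apply csSup_le hSane
    rintro y ⟨t, ht, rfl⟩
    rw [div_le_iff_of_neg ht]
    have := hgz₀ t; linarith
  have hab : a ≤ b := le_trans haz₀ hz₀b
  -- slope monotonicity
  have hmonoPos : ∀ s t : ℝ, 0 < s → s ≤ t → g s / s ≤ g t / t := by
    intro s t hs hst
    have ht : 0 < t := lt_of_lt_of_le hs hst
    rw [div_le_div_iff₀ hs ht]
    have h1 := hg1 t (Z s)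
    have h2 := hV0 (Z s)
    rw [hgval s]
    nlinarith [mul_le_mul_of_nonneg_left h1 hs.le, mul_le_mul_of_nonneg_right hst h2]
  have hmonoNeg : ∀ s t : ℝ, s ≤ t → t < 0 → g s / s ≤ g t / t := by
    intro s t hst ht
    have hs : s < 0 := lt_of_le_of_lt hst ht
    have key : g s * t ≤ g t * s := by
      have h1 := hg1 s (Z t)
      have h2 := hV0 (Z t)
      rw [hgval t]
      nlinarith [mul_le_mul_of_nonpos_left h1 ht.le, mul_le_mul_of_nonneg_right hst h2]
    have hst0 : 0 < s * t := mul_pos_of_neg_of_neg hs ht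
    have e1 : g s * t / (s * t) = g s / s := mul_div_mul_right _ _ (ne_of_lt ht)
    have e2 : g t * s / (s * t) = g t / t := by
      rw [mul_comm s t]; exact mul_div_mul_right _ _ (ne_of_lt hs)
    rw [← e1, ← e2]
    exact (div_le_div_iff_of_pos_right hst0).mpr key
  -- explicit formula for g on positive reals
  have hb : ∀ p : ℝ, 0 < p → g p = p ^ 2 / 2 + p * b := by
    intro p hp
    have hp0 : p ≠ 0 := ne_of_gt hp
    set c : ℝ := g p / p - p / 2 with hc
    have hbn : ∀ n : ℕ, b ≤ c + p / 2 ^ (n + 1) := by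
      intro n
      have hmem : g (p / 2 ^ n) / (p / 2 ^ n) ∈ Sb := ⟨p / 2 ^ n, by positivity, rfl⟩
      have h := csInf_le hSbbdd hmem
      rw [hval p hp0 n] at h
      exact h
    have hb1 : b ≤ c := by
      by_contra hcon
      push_neg at hcon
      obtain ⟨n, hn⟩ := exists_pow_lt_of_lt_one (div_pos (sub_pos.2 hcon) hp)
        (by norm_num : (1/2 : ℝ) < 1)
      have h1 := hbn n
      have h3 : p * (1/2:ℝ) ^ n < p * ((b - c) / p) := mul_lt_mul_of_pos_left hn hp
      have h4 : p * ((b - c) / p) = b - c := by field_simp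
      have h5 : p / 2 ^ (n + 1) = p * (1/2:ℝ) ^ n / 2 := by
        rw [div_pow, one_pow, pow_succ]; ring
      have hbc : 0 < b - c := sub_pos.2 hcon
      rw [h4] at h3
      rw [h5] at h1
      have hq : 0 < p * (1/2:ℝ) ^ n := by positivity
      linarith
    have hb2 : c ≤ b := by
      apply le_csInf hSbne
      rintro y ⟨t, ht, rfl⟩
      obtain ⟨n, hn⟩ := pow_unbounded_of_one_lt (p / t) (by norm_num : (1:ℝ) < 2)
      have h2n : (0:ℝ) < 2 ^ n := by positivity
      have hlt : p / 2 ^ n < t := by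
        rw [div_lt_iff₀ h2n]
        rw [div_lt_iff₀ ht] at hn
        nlinarith
      have hmono := hmonoPos (p / 2 ^ n) t (by positivity) hlt.le
      rw [hval p hp0 n] at hmono
      have hpos : (0:ℝ) < p / 2 ^ (n + 1) := by positivity
      linarith
    have hcb : c = b := le_antisymm hb2 hb1
    have hgp : g p = p * (g p / p) := by field_simp
    have hcc : g p / p = c + p / 2 := by rw [hc]; ring
    rw [hgp, hcc, hcb]
    ring
  -- explicit formula for g on negative reals
  have ha : ∀ p : ℝ, p < 0 → g p = p ^ 2 / 2 + p * a := by
    intro p hp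
    have hp0 : p ≠ 0 := ne_of_lt hp
    set c : ℝ := g p / p - p / 2 with hc
    have han : ∀ n : ℕ, c + p / 2 ^ (n + 1) ≤ a := by
      intro n
      have hplt : p / 2 ^ n < 0 := div_neg_of_neg_of_pos hp (by positivity)
      have hmem : g (p / 2 ^ n) / (p / 2 ^ n) ∈ Sa := ⟨p / 2 ^ n, hplt, rfl⟩
      have h := le_csSup hSabdd hmem
      rw [hval p hp0 n] at h
      exact h
    have ha1 : c ≤ a := by
      by_contra hcon
      push_neg at hcon
      obtain ⟨n, hn⟩ := exists_pow_lt_of_lt_one (div_pos (sub_pos.2 hcon) (neg_pos.2 hp))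
        (by norm_num : (1/2 : ℝ) < 1)
      have h1 := han n
      have h3 : (-p) * (1/2:ℝ) ^ n < (-p) * ((c - a) / (-p)) :=
        mul_lt_mul_of_pos_left hn (neg_pos.2 hp)
      have h4 : (-p) * ((c - a) / (-p)) = c - a := by
        field_simp
      have h5 : p / 2 ^ (n + 1) = p * (1/2:ℝ) ^ n / 2 := by
        rw [div_pow, one_pow, pow_succ]; ring
      rw [h4] at h3
      rw [h5] at h1
      have hq : p * (1/2:ℝ) ^ n < 0 := mul_neg_of_neg_of_pos hp (by positivity)
      linarith
    have ha2 : a ≤ c := by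
      apply csSup_le hSane
      rintro y ⟨t, ht, rfl⟩
      obtain ⟨n, hn⟩ := pow_unbounded_of_one_lt ((-p) / (-t)) (by norm_num : (1:ℝ) < 2)
      have h2n : (0:ℝ) < 2 ^ n := by positivity
      have hlt : t < p / 2 ^ n := by
        rw [div_lt_iff₀ (neg_pos.2 ht)] at hn
        rw [lt_div_iff₀ h2n]
        nlinarith
      have hplt : p / 2 ^ n < 0 := div_neg_of_neg_of_pos hp h2n
      have hmono := hmonoNeg t (p / 2 ^ n) hlt.le hplt
      rw [hval p hp0 n] at hmono
      have hneg : p / 2 ^ (n + 1) < 0 := div_neg_of_neg_of_pos hp (by positivity)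
      linarith
    have hca : c = a := le_antisymm ha1 ha2
    have hgp : g p = p * (g p / p) := by field_simp
    have hcc : g p / p = c + p / 2 := by rw [hc]; ring
    rw [hgp, hcc, hca]
    ring
  -- quadratic lower bounds outside [a,b]
  have hlow : ∀ w, b < w → (w - b) ^ 2 / 2 ≤ V w := by
    intro w hw
    have hp : 0 < w - b := sub_pos.2 hw
    have h1 := hg1 (w - b) w
    rw [hb (w - b) hp] at h1
    nlinarith [h1, sq_nonneg (w - b)]
  have hlow' : ∀ w, w < a → (w - a) ^ 2 / 2 ≤ V w := by
    intro w hw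
    have hp : w - a < 0 := sub_neg.2 hw
    have h1 := hg1 (w - a) w
    rw [ha (w - a) hp] at h1
    nlinarith [h1, sq_nonneg (w - a)]
  -- exact values outside [a,b]
  have houter : ∀ p : ℝ, 0 < p → V (b + p) = p ^ 2 / 2 := by
    intro p hp
    have hgw := hgval p
    have hgpb := hb p hp
    have hVw := hV0 (Z p)
    have hpp : 0 < p ^ 2 := by positivity
    have hwb : b < Z p := by
      by_contra hcon
      push_neg at hcon
      have hc1 : p * Z p ≤ p * b := mul_le_mul_of_nonneg_left hcon hp.le
      linarith
    have hVlow := hlow (Z p) hwb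
    have hsq : (Z p - b - p) ^ 2 ≤ 0 := by
      clear_value a Sa b Sb g V m
      nlinarith [hVlow, hgw, hgpb]
    have h0 : (Z p - b - p) ^ 2 = 0 := le_antisymm hsq (sq_nonneg _)
    have hw : Z p = b + p := by
      have := pow_eq_zero_iff (by norm_num : (2:ℕ) ≠ 0) |>.mp h0
      linarith
    have hVZ : V (Z p) = p * Z p - g p := by rw [hgval p]; ring
    rw [← hw, hVZ, hgpb, hw]
    ring
  have houter' : ∀ p : ℝ, p < 0 → V (a + p) = p ^ 2 / 2 := by
    intro p hp
    have hgw := hgval p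
    have hgpa := ha p hp
    have hVw := hV0 (Z p)
    have hpp : 0 < p ^ 2 := by nlinarith [mul_pos_of_neg_of_neg hp hp]
    have hwa : Z p < a := by
      by_contra hcon
      push_neg at hcon
      have hc1 : p * Z p ≤ p * a := mul_le_mul_of_nonpos_left hcon hp.le
      linarith
    have hVlow := hlow' (Z p) hwa
    have hsq : (Z p - a - p) ^ 2 ≤ 0 := by
      clear_value a Sa b Sb g V m
      nlinarith [hVlow, hgw, hgpa]
    have h0 : (Z p - a - p) ^ 2 = 0 := le_antisymm hsq (sq_nonneg _)
    have hw : Z p = a + p := by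
      have := pow_eq_zero_iff (by norm_num : (2:ℕ) ≠ 0) |>.mp h0
      linarith
    have hVZ : V (Z p) = p * Z p - g p := by rw [hgval p]; ring
    rw [← hw, hVZ, hgpa, hw]
    ring
  -- V vanishes at a and b
  have htend0 : Tendsto (fun n : ℕ => 1 / ((n:ℝ) + 1)) atTop (𝓝 0) :=
    tendsto_one_div_add_atTop_nhds_zero_nat
  have hVb : V b = 0 := by
    have hseqb : Tendsto (fun n : ℕ => b + 1 / ((n:ℝ) + 1)) atTop (𝓝 b) := by
      simpa using tendsto_const_nhds.add htend0
    have h1 : Tendsto (fun n : ℕ => V (b + 1 / ((n:ℝ) + 1))) atTop (𝓝 (V b)) :=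
      (hcontV.tendsto b).comp hseqb
    have h2 : (fun n : ℕ => V (b + 1 / ((n:ℝ) + 1)))
        = fun n : ℕ => (1 / ((n:ℝ) + 1)) ^ 2 / 2 :=
      funext fun n => houter _ (by positivity)
    rw [h2] at h1
    have h3 : Tendsto (fun n : ℕ => (1 / ((n:ℝ) + 1)) ^ 2 / 2) atTop (𝓝 0) := by
      have := (htend0.pow 2).div_const 2
      simpa using this
    exact tendsto_nhds_unique h1 h3
  have hVa : V a = 0 := by
    have hseqa : Tendsto (fun n : ℕ => a + -(1 / ((n:ℝ) + 1))) atTop (𝓝 a) := by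
      simpa using tendsto_const_nhds.add htend0.neg
    have h1 : Tendsto (fun n : ℕ => V (a + -(1 / ((n:ℝ) + 1)))) atTop (𝓝 (V a)) :=
      (hcontV.tendsto a).comp hseqa
    have h2 : (fun n : ℕ => V (a + -(1 / ((n:ℝ) + 1))))
        = fun n : ℕ => (1 / ((n:ℝ) + 1)) ^ 2 / 2 := by
      funext n
      have hneg : -(1 / ((n:ℝ) + 1)) < 0 := by
        have : (0:ℝ) < 1 / ((n:ℝ) + 1) := by positivity
        linarith
      rw [houter' _ hneg, neg_pow]
      norm_num
    rw [h2] at h1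
    have h3 : Tendsto (fun n : ℕ => (1 / ((n:ℝ) + 1)) ^ 2 / 2) atTop (𝓝 0) := by
      have := (htend0.pow 2).div_const 2
      simpa using this
    exact tendsto_nhds_unique h1 h3
  -- midpoints of zeros are zeros
  have hmid : ∀ w1 w2 : ℝ, V w1 = 0 → V w2 = 0 → V ((w1 + w2) / 2) = 0 := by
    intro w1 w2 h1 h2
    have h := hle ((w1 + w2) / 2) w1 w2
    have hsq : ((w1 + w2) / 2 - (w1 + w2) / 2) ^ 2 = 0 := by ring
    rw [hsq, h1, h2] at h
    have := hV0 ((w1 + w2) / 2)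
    linarith
  -- V vanishes on [a,b]
  have hIcc : ∀ z : ℝ, a ≤ z → z ≤ b → V z = 0 := by
    intro z haz hzb
    have hVset : IsClosed {w : ℝ | V w = 0} := isClosed_eq hcontV continuous_const
    have hK1 : IsCompact (Icc a z ∩ {w | V w = 0}) := isCompact_Icc.inter_right hVset
    have hK1ne : (Icc a z ∩ {w | V w = 0}).Nonempty := ⟨a, ⟨le_refl a, haz⟩, hVa⟩
    set w1 : ℝ := sSup (Icc a z ∩ {w | V w = 0}) with hw1def
    have hw1 : w1 ∈ Icc a z ∩ {w | V w = 0} := hK1.sSup_mem hK1ne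
    have hK2 : IsCompact (Icc z b ∩ {w | V w = 0}) := isCompact_Icc.inter_right hVset
    have hK2ne : (Icc z b ∩ {w | V w = 0}).Nonempty := ⟨b, ⟨hzb, le_refl b⟩, hVb⟩
    set w2 : ℝ := sInf (Icc z b ∩ {w | V w = 0}) with hw2def
    have hw2 : w2 ∈ Icc z b ∩ {w | V w = 0} := hK2.sInf_mem hK2ne
    have hmideq : V ((w1 + w2) / 2) = 0 := hmid w1 w2 hw1.2 hw2.2
    have hw1z : w1 ≤ z := hw1.1.2
    have hzw2 : z ≤ w2 := hw2.1.1
    have hw1a : a ≤ w1 := hw1.1.1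
    have hw2b : w2 ≤ b := hw2.1.2
    rcases le_or_gt ((w1 + w2) / 2) z with h | h
    · have hmem : (w1 + w2) / 2 ∈ Icc a z ∩ {w | V w = 0} :=
        ⟨⟨by linarith, h⟩, hmideq⟩
      have hle1 : (w1 + w2) / 2 ≤ w1 := le_csSup hK1.bddAbove hmem
      have hzz : z = w1 := le_antisymm (by linarith) hw1z
      rw [hzz]; exact hw1.2
    · have hmem : (w1 + w2) / 2 ∈ Icc z b ∩ {w | V w = 0} :=
        ⟨⟨h.le, by linarith⟩, hmideq⟩
      have hle2 : w2 ≤ (w1 + w2) / 2 := csInf_le hK2.bddBelow hmem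
      have hzz : z = w2 := le_antisymm hzw2 (by linarith)
      rw [hzz]; exact hw2.2
  -- final assembly
  refine ⟨m, a, b, hab, fun z => ?_⟩
  have hVz := hVval z
  rcases lt_or_ge z a with h | h
  · have h2 : z - a < 0 := sub_neg.2 h
    have h3 := houter' (z - a) h2
    rw [show a + (z - a) = z by ring] at h3
    rw [min_eq_left h2.le, max_eq_right (by linarith : z - b ≤ 0)]
    linarith
  · rcases le_or_gt z b with h3 | h3
    · have h4 := hIcc z h h3
      rw [min_eq_right (by linarith : (0:ℝ) ≤ z - a),
        max_eq_right (by linarith : z - b ≤ 0)]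
      norm_num
      linarith
    · have h4 := houter (z - b) (sub_pos.2 h3)
      rw [show b + (z - b) = z by ring] at h4
      rw [min_eq_right (by linarith : (0:ℝ) ≤ z - a),
        max_eq_left (by linarith : (0:ℝ) ≤ z - b)]
      linarith
end

section
/- Let m : ℝ → ℝ be continuous with m ≥ 0 and m(0) = 0, and let c ∈ ℝ. Define U₀ : ℝ → ℝ by U₀(z) = c·z + | ∫₀^z √(2·m(s)) ds |. Then U₀ is differentiable at every z ∈ ℝ, with U₀'(z) = c + √(2·m(z)) for z ≥ 0 and U₀'(z) = c − √(2·m(z)) for z ≤ 0, and it satisfies the limit Hamilton–Jacobi equation of the asexual model under the diffusion approximation: for all z ∈ ℝ, (1 − c²/2) + c·U₀'(z) + m(z) = 1 + (U₀'(z))²/2, equivalently (U₀'(z) − c)²/2 = m(z). -/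
/-- The profile `U₀ z = c z + |∫₀^z √(2 m s) ds|` is differentiable everywhere, with
derivative `c + √(2 m z)` for `z ≥ 0` and `c - √(2 m z)` for `z ≤ 0`, and it satisfies
the limit Hamilton–Jacobi equation of the asexual model under the diffusion
approximation. -/
theorem stmt6 (m : ℝ → ℝ) (hm : Continuous m) (hmnn : ∀ z : ℝ, 0 ≤ m z)
    (hm0 : m 0 = 0) (c : ℝ) (U₀ : ℝ → ℝ)
    (hU₀ : U₀ = fun z => c * z + |∫ s in (0:ℝ)..z, Real.sqrt (2 * m s)|) :
    (∀ z : ℝ, 0 ≤ z → HasDerivAt U₀ (c + Real.sqrt (2 * m z)) z) ∧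
    (∀ z : ℝ, z ≤ 0 → HasDerivAt U₀ (c - Real.sqrt (2 * m z)) z) ∧
    (∀ z : ℝ, (1 - c ^ 2 / 2) + c * deriv U₀ z + m z = 1 + (deriv U₀ z) ^ 2 / 2) ∧
    (∀ z : ℝ, (deriv U₀ z - c) ^ 2 / 2 = m z) := by
  set g : ℝ → ℝ := fun s => Real.sqrt (2 * m s) with hg
  have hgc : Continuous g := (continuous_const.mul hm).sqrt
  have hgnn : ∀ s, 0 ≤ g s := fun s => Real.sqrt_nonneg _
  set F : ℝ → ℝ := fun z => ∫ s in (0:ℝ)..z, g s with hFdef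
  have hF : ∀ z, HasDerivAt F (g z) z := fun z =>
    intervalIntegral.integral_hasDerivAt_right (hgc.intervalIntegrable _ _)
      (hgc.stronglyMeasurableAtFilter _ _) hgc.continuousAt
  have hF0 : F 0 = 0 := intervalIntegral.integral_same
  have hFnn : ∀ z, 0 ≤ z → 0 ≤ F z := fun z hz =>
    intervalIntegral.integral_nonneg hz (fun s _ => hgnn s)
  have hFnp : ∀ z, z ≤ 0 → F z ≤ 0 := by
    intro z hz
    have : 0 ≤ ∫ s in z..(0:ℝ), g s :=
      intervalIntegral.integral_nonneg hz (fun s _ => hgnn s)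
    have hswap : F z = -∫ s in z..(0:ℝ), g s := intervalIntegral.integral_symm _ _
    linarith
  have hU : U₀ = fun z => c * z + |F z| := hU₀
  have hg0 : g 0 = 0 := by simp [hg, hm0]
  -- derivative of |F| at 0 is 0
  have habs0 : HasDerivAt (fun z => |F z|) 0 0 := by
    have h := (hF 0).sub_const (F 0)
    rw [hasDerivAt_iff_isLittleO] at h ⊢
    have h' := h.norm_left
    simp only [hg0, smul_zero, sub_zero, hF0, abs_zero, Real.norm_eq_abs] at h' ⊢
    exact h'
  have key : (∀ z : ℝ, 0 ≤ z → HasDerivAt U₀ (c + g z) z) ∧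
      (∀ z : ℝ, z ≤ 0 → HasDerivAt U₀ (c - g z) z) := by
    constructor
    · intro z hz
      rcases eq_or_lt_of_le hz with rfl | hz'
      · rw [hU, hg0]
        simpa using ((hasDerivAt_id (0:ℝ)).const_mul c).fun_add habs0
      · have hev : (fun y => c * y + |F y|) =ᶠ[nhds z] (fun y => c * y + F y) := by
          filter_upwards [Ioi_mem_nhds hz'] with y hy
          rw [abs_of_nonneg (hFnn y (le_of_lt hy))]
        rw [hU]
        have hbase : HasDerivAt (fun y => c * y + F y) (c + g z) z := by
          simpa using ((hasDerivAt_id z).const_mul c).fun_add (hF z)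
        exact hbase.congr_of_eventuallyEq hev
    · intro z hz
      rcases eq_or_lt_of_le hz with rfl | hz'
      · rw [hU, hg0]
        simpa using ((hasDerivAt_id (0:ℝ)).const_mul c).fun_add habs0
      · have hev : (fun y => c * y + |F y|) =ᶠ[nhds z] (fun y => c * y + -F y) := by
          filter_upwards [Iio_mem_nhds hz'] with y hy
          rw [abs_of_nonpos (hFnp y (le_of_lt hy))]
        rw [hU]
        have hbase : HasDerivAt (fun y => c * y + -F y) (c - g z) z := by
          simpa [sub_eq_add_neg] using ((hasDerivAt_id z).const_mul c).fun_add (hF z).fun_neg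
        exact hbase.congr_of_eventuallyEq hev
  obtain ⟨h1, h2⟩ := key
  have hderiv : ∀ z, (deriv U₀ z - c) ^ 2 / 2 = m z := by
    intro z
    rcases le_total 0 z with hz | hz
    · rw [(h1 z hz).deriv]
      have : c + g z - c = g z := by ring
      rw [this, Real.sq_sqrt (by nlinarith [hmnn z])]
      ring
    · rw [(h2 z hz).deriv]
      have : c - g z - c = -g z := by ring
      rw [this, neg_pow, Real.sq_sqrt (by nlinarith [hmnn z])]
      ring
  exact ⟨h1, h2, fun z => by have := hderiv z; nlinarith [hderiv z], hderiv⟩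
end

section
/- Let c ≥ 0, let m : ℝ → ℝ be continuous with m ≥ 0 and m(0) = 0, and suppose there is a finite M with m(z) < M for all z ∈ ℝ and m(z) → M as z → +∞ and as z → −∞. Let U : ℝ → ℝ be differentiable with U(z) → +∞ as z → +∞ and as z → −∞, and let λ ∈ ℝ be such that for all z ∈ ℝ, λ + c·U'(z) + m(z) = 1 + (U'(z))²/2. Then λ = 1 − c²/2. -/
/-- Identification of the mean fitness `λ = 1 - c²/2` in the asexual model under the
diffusion approximation, for a bounded selection function `m` with equal limits `M`
at `±∞`, and a profile `U` tending to `+∞` at both ends. -/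
theorem stmt7 (c : ℝ) (hc : 0 ≤ c) (m : ℝ → ℝ) (hm : Continuous m)
    (hmnn : ∀ z : ℝ, 0 ≤ m z) (hm0 : m 0 = 0) (M : ℝ)
    (hlt : ∀ z : ℝ, m z < M)
    (hlimTop : Filter.Tendsto m Filter.atTop (nhds M))
    (hlimBot : Filter.Tendsto m Filter.atBot (nhds M))
    (U : ℝ → ℝ) (hU : Differentiable ℝ U)
    (hUtop : Filter.Tendsto U Filter.atTop Filter.atTop)
    (hUbot : Filter.Tendsto U Filter.atBot Filter.atTop)
    (lam : ℝ)
    (heq : ∀ z : ℝ, lam + c * deriv U z + m z = 1 + (deriv U z) ^ 2 / 2) :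
    lam = 1 - c ^ 2 / 2 := by
  set K : ℝ := lam - 1 + c ^ 2 / 2 with hKdef
  have key : ∀ z : ℝ, (deriv U z - c) ^ 2 = 2 * (m z + K) := by
    intro z
    rw [hKdef]
    linear_combination (-2) * heq z
  have hK0 : 0 ≤ K := by
    have := key 0
    rw [hm0] at this
    nlinarith [sq_nonneg (deriv U 0 - c), this]
  -- it suffices to show K ≤ 0
  suffices hKle : K ≤ 0 by
    have : K = 0 := le_antisymm hKle hK0
    rw [hKdef] at this
    linarith
  by_contra hKpos'
  push_neg at hKpos'
  have hKpos : 0 < K := hKpos'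
  -- deriv U never equals c
  have hne : ∀ x ∈ (Set.univ : Set ℝ), deriv U x ≠ c := by
    intro x _ hx
    have := key x
    rw [hx] at this
    have hmx := hmnn x
    nlinarith
  -- if deriv U is everywhere positive, contradiction with behavior at -∞
  have hpos_contra : ¬ (∀ z : ℝ, 0 < deriv U z) := by
    intro hpos
    have hmono : StrictMono U := strictMono_of_deriv_pos hpos
    have hev : ∀ᶠ z in Filter.atBot, U 0 < U z := hUbot.eventually (Filter.eventually_gt_atTop (U 0))
    rw [Filter.eventually_atBot] at hev
    obtain ⟨z₀, hz₀⟩ := hev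
    have h1 : U 0 < U (min z₀ (-1)) := hz₀ _ (min_le_left _ _)
    have h2 : U (min z₀ (-1)) ≤ U 0 := by
      apply hmono.monotone
      exact le_trans (min_le_right _ _) (by norm_num)
    linarith
  -- Darboux: deriv U - c has constant sign
  have darboux := hasDerivWithinAt_forall_lt_or_forall_gt_of_forall_ne
    (f := U) (f' := deriv U) convex_univ
    (fun x _ => (hU x).hasDerivAt.hasDerivWithinAt) hne
  rcases darboux with hlt' | hgt'
  · -- case deriv U < c everywhere
    have hform : ∀ z : ℝ, deriv U z = c - Real.sqrt (2 * (m z + K)) := by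
      intro z
      have h1 : deriv U z < c := hlt' z (Set.mem_univ z)
      have h2 : Real.sqrt (2 * (m z + K)) = |deriv U z - c| := by
        rw [← key z, Real.sqrt_sq_eq_abs]
      rw [abs_of_neg (by linarith)] at h2
      linarith
    set b : ℝ := c - Real.sqrt (2 * (M + K)) with hbdef
    have hsqlt : ∀ z : ℝ, Real.sqrt (2 * (m z + K)) < Real.sqrt (2 * (M + K)) := by
      intro z
      apply Real.sqrt_lt_sqrt (by nlinarith [hmnn z])
      nlinarith [hlt z]
    by_cases hb : 0 ≤ b
    · -- then deriv U > b ≥ 0 everywhere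
      apply hpos_contra
      intro z
      rw [hform z]
      have := hsqlt z
      rw [hbdef] at hb
      linarith
    · push_neg at hb
      -- deriv U tends to b < 0 at +∞
      have hlim : Filter.Tendsto (deriv U) Filter.atTop (nhds b) := by
        have h1 : Filter.Tendsto (fun z => 2 * (m z + K)) Filter.atTop
            (nhds (2 * (M + K))) := ((hlimTop.add_const K).const_mul 2)
        have h2 : Filter.Tendsto (fun z => c - Real.sqrt (2 * (m z + K))) Filter.atTop
            (nhds (c - Real.sqrt (2 * (M + K)))) := by
          exact Filter.Tendsto.const_sub c
            ((Real.continuous_sqrt.tendsto _).comp h1)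
        rw [← hbdef] at h2
        exact h2.congr (fun z => (hform z).symm)
      have hev : ∀ᶠ z in Filter.atTop, deriv U z < b / 2 :=
        hlim.eventually_lt_const (by linarith)
      rw [Filter.eventually_atTop] at hev
      obtain ⟨z₀, hz₀⟩ := hev
      have hanti : AntitoneOn U (Set.Ici z₀) := by
        apply antitoneOn_of_deriv_nonpos (convex_Ici z₀)
          hU.continuous.continuousOn hU.differentiableOn
        intro x hx
        rw [interior_Ici] at hx
        exact le_of_lt (lt_trans (hz₀ x (le_of_lt hx)) (by linarith))
      have hev2 : ∀ᶠ z in Filter.atTop, U z₀ < U z := hUtop.eventually (Filter.eventually_gt_atTop (U z₀))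
      rw [Filter.eventually_atTop] at hev2
      obtain ⟨z₁, hz₁⟩ := hev2
      have h3 : U z₀ < U (max z₀ z₁) := hz₁ _ (le_max_right _ _)
      have h4 : U (max z₀ z₁) ≤ U z₀ :=
        hanti (Set.self_mem_Ici) (Set.mem_Ici.mpr (le_max_left _ _)) (le_max_left _ _)
      linarith
  · -- case deriv U > c everywhere : deriv U > c ≥ 0, contradiction
    exact hpos_contra (fun z => lt_of_le_of_lt hc (hgt' z (Set.mem_univ z)))
end

section
/- Let c ∈ ℝ, let H : ℝ → ℝ be convex and differentiable, and let p_c ∈ ℝ satisfy H'(p_c) = c, so that L(c) := c·p_c − H(p_c) = sup_{p ∈ ℝ} ( c·p − H(p) ). Let m : ℝ → ℝ be continuous with m ≥ 0, m(0) = 0, and m(z) → +∞ as z → +∞ and as z → −∞. Let U : ℝ → ℝ be differentiable with U(z) → +∞ as z → +∞ and as z → −∞, and let λ ∈ ℝ be such that for all z ∈ ℝ, λ + c·U'(z) + m(z) = 1 + H(U'(z)). Then λ = 1 − L(c). -/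
open Set Filter

/-- Supporting line for a convex differentiable function. -/
lemma support_line {H : ℝ → ℝ} (hHconv : ConvexOn ℝ Set.univ H)
    (hHdiff : Differentiable ℝ H) (pc p : ℝ) :
    H pc + deriv H pc * (p - pc) ≤ H p := by
  rcases lt_trichotomy p pc with h | h | h
  · have hs := hHconv.slope_le_deriv (mem_univ p) (mem_univ pc) h (hHdiff pc)
    rw [slope_def_field] at hs
    have hd : (0:ℝ) < pc - p := by linarith
    rw [div_le_iff₀ hd] at hs
    nlinarith
  · simp [h]
  · have hs := hHconv.deriv_le_slope (mem_univ pc) (mem_univ p) h (hHdiff pc)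
    rw [slope_def_field] at hs
    have hd : (0:ℝ) < p - pc := by linarith
    rw [le_div_iff₀ hd] at hs
    nlinarith

/-- Identification of the mean fitness `λ = 1 - L(c)` in the asexual model with a general
Hamiltonian `H` (convex, differentiable), where `L(c) = c p_c - H(p_c)` with
`H'(p_c) = c`, for a coercive selection function `m` and a profile `U` tending to
`+∞` at both ends. -/
theorem stmt8 (c : ℝ) (H : ℝ → ℝ) (hHconv : ConvexOn ℝ Set.univ H)
    (hHdiff : Differentiable ℝ H) (pc : ℝ) (hpc : deriv H pc = c)
    (m : ℝ → ℝ) (hm : Continuous m) (hmnn : ∀ z : ℝ, 0 ≤ m z) (hm0 : m 0 = 0)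
    (hmTop : Filter.Tendsto m Filter.atTop Filter.atTop)
    (hmBot : Filter.Tendsto m Filter.atBot Filter.atTop)
    (U : ℝ → ℝ) (hU : Differentiable ℝ U)
    (hUtop : Filter.Tendsto U Filter.atTop Filter.atTop)
    (hUbot : Filter.Tendsto U Filter.atBot Filter.atTop)
    (lam : ℝ)
    (heq : ∀ z : ℝ, lam + c * deriv U z + m z = 1 + H (deriv U z)) :
    lam = 1 - (c * pc - H pc) := by
  set G : ℝ → ℝ := fun p => H p - c * p with hG
  have hGcont : Continuous G := (hHdiff.continuous).sub (continuous_const.mul continuous_id)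
  -- G attains its min at pc
  have hGmin : ∀ p, G pc ≤ G p := by
    intro p
    have := support_line hHconv hHdiff pc p
    rw [hpc] at this
    simp only [hG]
    nlinarith
  -- key identity
  have hkey : ∀ z, G (deriv U z) = lam - 1 + m z := by
    intro z
    have := heq z
    simp only [hG]
    linarith
  -- lower bound: lam - 1 ≥ G pc
  have hlow : G pc ≤ lam - 1 := by
    have := hkey 0
    rw [hm0] at this
    calc G pc ≤ G (deriv U 0) := hGmin _
      _ = lam - 1 := by linarith
  -- suppose strict
  by_cases hstrict : G pc < lam - 1
  · exfalso
    have hne : ∀ z : ℝ, deriv U z ≠ pc := by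
      intro z hz
      have := hkey z
      rw [hz] at this
      have := hmnn z
      linarith
    have hdarboux := hasDerivWithinAt_forall_lt_or_forall_gt_of_forall_ne
      (convex_univ (𝕜 := ℝ) (E := ℝ))
      (f := U) (f' := deriv U)
      (fun x _ => ((hU x).hasDerivAt).hasDerivWithinAt) (m := pc)
      (fun x _ => hne x)
    rcases hdarboux with hlt | hgt
    · -- deriv U < pc everywhere; contradiction at +∞
      set K : ℝ := min pc 0 - 1 with hK
      obtain ⟨x0, hx0mem, hx0⟩ := isCompact_Icc.exists_isMaxOn
        (nonempty_Icc.2 (by simp only [hK]; linarith [min_le_left pc 0])) (hGcont.continuousOn (s := Icc K pc))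
      set M : ℝ := G x0 with hM
      have hz0 : ∀ᶠ z in atTop, M - (lam - 1) < m z := hmTop.eventually_gt_atTop _
      obtain ⟨z0, hz0'⟩ := hz0.exists_forall_of_atTop
      have hder : ∀ z, z0 ≤ z → deriv U z < K := by
        intro z hz
        by_contra hcon
        push_neg at hcon
        have hmem : deriv U z ∈ Icc K pc := ⟨hcon, (hlt z (mem_univ z)).le⟩
        have h1 : G (deriv U z) ≤ M := hx0 hmem
        have h2 := hkey z
        have h3 := hz0' z hz
        linarith
      have hKneg : K < 0 := by
        simp only [hK]; linarith [min_le_right pc 0]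
      -- U strictly decreasing on [z0, ∞)
      have hanti : StrictAntiOn U (Ici z0) := by
        apply strictAntiOn_of_deriv_neg (convex_Ici z0) hU.continuous.continuousOn
        intro x hx
        rw [interior_Ici] at hx
        exact lt_trans (hder x (le_of_lt hx)) hKneg
      have hev : ∀ᶠ z in atTop, U (z0) < U z := hUtop.eventually_gt_atTop _
      obtain ⟨z1, hz1a, hz1b⟩ := (hev.and (eventually_ge_atTop (z0 + 1))).exists
      have : U z1 < U z0 := hanti (le_refl z0 : z0 ∈ Ici z0) (by simp; linarith : z1 ∈ Ici z0) (by linarith)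
      linarith
    · -- deriv U > pc everywhere; contradiction at -∞
      set K : ℝ := max pc 0 + 1 with hK
      obtain ⟨x0, hx0mem, hx0⟩ := isCompact_Icc.exists_isMaxOn
        (nonempty_Icc.2 (by simp only [hK]; linarith [le_max_left pc 0])) (hGcont.continuousOn (s := Icc pc K))
      set M : ℝ := G x0 with hM
      have hz0 : ∀ᶠ z in atBot, M - (lam - 1) < m z := hmBot.eventually_gt_atTop _
      obtain ⟨z0, hz0'⟩ := hz0.exists_forall_of_atBot
      have hder : ∀ z, z ≤ z0 → K < deriv U z := by
        intro z hz
        by_contra hcon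
        push_neg at hcon
        have hmem : deriv U z ∈ Icc pc K := ⟨(hgt z (mem_univ z)).le, hcon⟩
        have h1 : G (deriv U z) ≤ M := hx0 hmem
        have h2 := hkey z
        have h3 := hz0' z hz
        linarith
      have hKpos : 0 < K := by
        simp only [hK]; linarith [le_max_right pc 0]
      have hmono : StrictMonoOn U (Iic z0) := by
        apply strictMonoOn_of_deriv_pos (convex_Iic z0) hU.continuous.continuousOn
        intro x hx
        rw [interior_Iic] at hx
        exact lt_trans hKpos (hder x (le_of_lt hx))
      have hev : ∀ᶠ z in atBot, U (z0) < U z := hUbot.eventually_gt_atTop _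
      obtain ⟨z1, hz1a, hz1b⟩ := (hev.and (eventually_le_atBot (z0 - 1))).exists
      have : U z1 < U z0 := hmono (by simp; linarith : z1 ∈ Iic z0) (le_refl z0 : z0 ∈ Iic z0) (by linarith)
      linarith
  · push_neg at hstrict
    have : G pc = lam - 1 := le_antisymm hlow hstrict
    simp only [hG] at this
    linarith
end

section
/- Let ε > 0, c ∈ ℝ, λ ∈ ℝ, let K be an even, nonnegative, measurable probability density on ℝ with ∫_ℝ |y|·K(y) dy < ∞, let m : ℝ → ℝ be continuous, and let F : ℝ → ℝ be nonnegative and differentiable with F, F', z ↦ zF(z), z ↦ zF'(z), z ↦ m(z)F(z) and z ↦ z·m(z)F(z) integrable, with ρ := ∫_ℝ F(z) dz > 0, with z·F(z) → 0 as z → ±∞, and suppose the stationary asexual equation holds: for every z ∈ ℝ, λ·F(z) − ε·c·F'(z) + m(z)·F(z) = (1/ε)·∫_ℝ K((z − z')/ε)·F(z') dz'. Let z̄ := (1/ρ)·∫_ℝ z·F(z) dz be the mean phenotypic lag. Then ε·c·ρ + ∫_ℝ (z − z̄)·m(z)·F(z) dz = 0. -/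
open MeasureTheory

/-- Evolutionary (genetic) equilibrium relation of the stationary asexual model:
multiplying the equation `λF - εcF' + mF = Bε(F)` by `(z - z̄)` and integrating yields
`ε c ρ + ∫ (z - z̄) m(z) F(z) dz = 0`, where `ρ = ∫F` and `z̄` is the mean lag. -/
theorem stmt12 (ε c lam : ℝ) (hε : 0 < ε)
    (K : ℝ → ℝ) (hKmeas : Measurable K) (hKnn : ∀ y : ℝ, 0 ≤ K y)
    (hKeven : ∀ y : ℝ, K (-y) = K y) (hK1 : ∫ y : ℝ, K y = 1)
    (hKmom : Integrable (fun y : ℝ => |y| * K y))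
    (m : ℝ → ℝ) (hm : Continuous m)
    (F : ℝ → ℝ) (hFnn : ∀ z : ℝ, 0 ≤ F z) (hF : Differentiable ℝ F)
    (hFint : Integrable F) (hF'int : Integrable (deriv F))
    (hzFint : Integrable (fun z : ℝ => z * F z))
    (hzF'int : Integrable (fun z : ℝ => z * deriv F z))
    (hmFint : Integrable (fun z : ℝ => m z * F z))
    (hzmFint : Integrable (fun z : ℝ => z * m z * F z))
    (ρ : ℝ) (hρ : ρ = ∫ z : ℝ, F z) (hρpos : 0 < ρ)
    (hzFtop : Filter.Tendsto (fun z : ℝ => z * F z) Filter.atTop (nhds 0))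
    (hzFbot : Filter.Tendsto (fun z : ℝ => z * F z) Filter.atBot (nhds 0))
    (heq : ∀ z : ℝ, lam * F z - ε * c * deriv F z + m z * F z
      = (1 / ε) * ∫ z' : ℝ, K ((z - z') / ε) * F z')
    (zbar : ℝ) (hzbar : zbar = (1 / ρ) * ∫ z : ℝ, z * F z) :
    ε * c * ρ + ∫ z : ℝ, (z - zbar) * m z * F z = 0 := by
  have hFcont : Continuous F := hF.continuous
  have hεne : ε ≠ 0 := hε.ne'
  -- ## Part 1: kernel preliminaries
  have hKint : Integrable K := by
    by_contra h
    rw [integral_undef h] at hK1; norm_num at hK1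
  have hKε : Integrable (fun u : ℝ => K (u / ε)) := hKint.comp_div hεne
  have habsKε : Integrable (fun u : ℝ => |u| * K (u / ε)) := by
    have h := ((hKmom.const_mul ε).comp_div (g := fun w => ε * (|w| * K w)) hεne)
    refine h.congr (Filter.Eventually.of_forall fun u => ?_)
    show ε * (|u / ε| * K (u / ε)) = |u| * K (u / ε)
    have : ε * |u / ε| = |u| := by
      rw [abs_div, abs_of_pos hε]; field_simp
    rw [← this]; ring
  have huKε : Integrable (fun u : ℝ => u * K (u / ε)) := by
    refine habsKε.mono ?_ (Filter.Eventually.of_forall fun u => ?_)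
    · exact (measurable_id.mul (hKmeas.comp (measurable_id.div_const ε))).aestronglyMeasurable
    · simp [abs_mul]
  have hintKε : ∫ u : ℝ, K (u / ε) = ε := by
    rw [MeasureTheory.Measure.integral_comp_div K ε, hK1, abs_of_pos hε]; simp
  have hodd : ∫ u : ℝ, u * K (u / ε) = 0 := by
    have h2 : ∫ u : ℝ, u * K (u / ε) = - ∫ u : ℝ, u * K (u / ε) := by
      conv_lhs => rw [← integral_neg_eq_self (fun u : ℝ => u * K (u / ε)) volume]
      rw [← integral_neg]
      congr 1; funext u
      rw [neg_div, hKeven]; ring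
    linarith
  have hshift : ∀ a : ℝ, ∫ u : ℝ, K ((u - a) / ε) = ε := by
    intro a
    rw [integral_sub_right_eq_self (fun u : ℝ => K (u / ε)) a, hintKε]
  have hshiftz : ∀ a : ℝ, ∫ z : ℝ, z * K ((z - a) / ε) = a * ε := by
    intro a
    have h1 : ∫ z : ℝ, z * K ((z - a) / ε)
        = ∫ u : ℝ, (u + a) * K (u / ε) := by
      rw [← integral_sub_right_eq_self (fun u : ℝ => (u + a) * K (u / ε)) a]
      congr 1; funext z; ring_nf
    have h2 : ∫ u : ℝ, (u + a) * K (u / ε)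
        = (∫ u : ℝ, u * K (u / ε)) + ∫ u : ℝ, a * K (u / ε) := by
      rw [← integral_add huKε (hKε.const_mul a)]
      congr 1; funext u; ring
    rw [h1, h2, hodd, integral_const_mul, hintKε]; ring
  -- ## Part 2: FTC consequences
  have hderivF : ∀ x : ℝ, HasDerivAt F (deriv F x) x := fun x => (hF x).hasDerivAt
  have hFtop : Filter.Tendsto F Filter.atTop (nhds 0) := by
    have h1 : Filter.Tendsto (fun z : ℝ => z * F z * z⁻¹) Filter.atTop (nhds 0) := by
      simpa using hzFtop.mul tendsto_inv_atTop_zero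
    refine h1.congr' ?_
    filter_upwards [Filter.Ioi_mem_atTop (0:ℝ)] with z hz
    have hz' : z ≠ 0 := ne_of_gt hz
    rw [mul_comm z (F z), mul_assoc, mul_inv_cancel₀ hz', mul_one]
  have hFbot : Filter.Tendsto F Filter.atBot (nhds 0) := by
    have h1 : Filter.Tendsto (fun z : ℝ => z * F z * z⁻¹) Filter.atBot (nhds 0) := by
      have hinvbot : Filter.Tendsto (fun z : ℝ => z⁻¹) Filter.atBot (nhds 0) := by
        have := (tendsto_inv_atTop_zero.comp (Filter.tendsto_neg_atBot_atTop (G := ℝ))).neg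
        simpa [Function.comp, inv_neg] using this
      simpa using hzFbot.mul hinvbot
    refine h1.congr' ?_
    filter_upwards [Filter.Iio_mem_atBot (0:ℝ)] with z hz
    have hz' : z ≠ 0 := ne_of_lt hz
    rw [mul_comm z (F z), mul_assoc, mul_inv_cancel₀ hz', mul_one]
  have hE1 : ∫ z : ℝ, deriv F z = 0 := by
    have hIic : ∫ z in Set.Iic (0:ℝ), deriv F z = F 0 - 0 :=
      integral_Iic_of_hasDerivAt_of_tendsto' (fun x _ => hderivF x) hF'int.integrableOn hFbot
    have hIoi : ∫ z in Set.Ioi (0:ℝ), deriv F z = 0 - F 0 :=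
      integral_Ioi_of_hasDerivAt_of_tendsto' (fun x _ => hderivF x) hF'int.integrableOn hFtop
    have hsum := intervalIntegral.integral_Iic_add_Ioi (b := (0:ℝ))
      hF'int.integrableOn hF'int.integrableOn
    rw [hIic, hIoi] at hsum; linarith
  have hE2 : ∫ z : ℝ, z * deriv F z = -ρ := by
    have hgderiv : ∀ x : ℝ, HasDerivAt (fun z : ℝ => z * F z) (1 * F x + x * deriv F x) x :=
      fun x => (hasDerivAt_id x).mul (hderivF x)
    have hg'int : Integrable (fun z : ℝ => 1 * F z + z * deriv F z) := by
      refine (hFint.add hzF'int).congr (Filter.Eventually.of_forall fun z => ?_)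
      simp
    have hIic : ∫ z in Set.Iic (0:ℝ), (1 * F z + z * deriv F z) = 0 * F 0 - 0 :=
      integral_Iic_of_hasDerivAt_of_tendsto' (fun x _ => hgderiv x) hg'int.integrableOn hzFbot
    have hIoi : ∫ z in Set.Ioi (0:ℝ), (1 * F z + z * deriv F z) = 0 - 0 * F 0 :=
      integral_Ioi_of_hasDerivAt_of_tendsto' (fun x _ => hgderiv x) hg'int.integrableOn hzFtop
    have hsum := intervalIntegral.integral_Iic_add_Ioi (b := (0:ℝ))
      hg'int.integrableOn hg'int.integrableOn
    rw [hIic, hIoi] at hsum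
    have hsplit : ∫ z : ℝ, (1 * F z + z * deriv F z)
        = (∫ z : ℝ, F z) + ∫ z : ℝ, z * deriv F z := by
      rw [← integral_add hFint hzF'int]; congr 1; funext z; ring
    rw [hsplit] at hsum
    rw [hρ]; linarith
  -- ## Part 3: Fubini and moments of the convolution operator
  have hmeasprod : Measurable (fun p : ℝ × ℝ => K ((p.1 - p.2) / ε) * F p.2) :=
    (hKmeas.comp ((measurable_fst.sub measurable_snd).div_const ε)).mul
      (hFcont.measurable.comp measurable_snd)
  have hslice : ∀ z' : ℝ, Integrable (fun z : ℝ => K ((z - z') / ε) * F z') :=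
    fun z' => (hKε.comp_sub_right z').mul_const (F z')
  have hslice_int : ∀ z' : ℝ, ∫ z : ℝ, K ((z - z') / ε) * F z' = ε * F z' := by
    intro z'
    rw [integral_mul_const, hshift z']
  have hf_prod : Integrable (Function.uncurry fun z z' : ℝ => K ((z - z') / ε) * F z')
      (volume.prod volume) := by
    refine (integrable_prod_iff' (f := fun p : ℝ × ℝ => K ((p.1 - p.2) / ε) * F p.2)
      hmeasprod.aestronglyMeasurable).mpr ⟨?_, ?_⟩
    · exact Filter.Eventually.of_forall fun z' => hslice z'
    · have : (fun z' : ℝ => ∫ z : ℝ, ‖K ((z - z') / ε) * F z'‖) = fun z' => ε * F z' := by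
        funext z'
        rw [← hslice_int z']
        congr 1; funext z
        rw [Real.norm_of_nonneg (mul_nonneg (hKnn _) (hFnn _))]
      rw [this]
      exact hFint.const_mul ε
  have hT1 : ∫ z : ℝ, (1 / ε) * ∫ z' : ℝ, K ((z - z') / ε) * F z' = ∫ z : ℝ, F z := by
    rw [integral_const_mul, integral_integral_swap hf_prod]
    simp only [hslice_int]
    rw [integral_const_mul]
    field_simp
  set M : ℝ := ∫ y : ℝ, |y| * K y with hM
  have hBint : ∫ u : ℝ, |u| * K (u / ε) = ε * (ε * M) := by
    have h := MeasureTheory.Measure.integral_comp_div (fun w : ℝ => |ε * w| * K w) ε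
    have h1 : (fun x : ℝ => |ε * (x / ε)| * K (x / ε)) = fun u : ℝ => |u| * K (u / ε) := by
      funext x
      have : ε * (x / ε) = x := by field_simp
      rw [this]
    have h2 : ∫ y : ℝ, |ε * y| * K y = ε * M := by
      simp only [abs_mul, abs_of_pos hε, mul_assoc]
      rw [integral_const_mul]
    rw [h1] at h
    rw [h, h2, abs_of_pos hε, smul_eq_mul]
  have habsshift2 : ∀ a : ℝ, ∫ z : ℝ, |z - a| * K ((z - a) / ε) = ε * (ε * M) := by
    intro a
    rw [integral_sub_right_eq_self (fun u : ℝ => |u| * K (u / ε)) a, hBint]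
  have hmeasA : Measurable (fun p : ℝ × ℝ => |p.1 - p.2| * K ((p.1 - p.2) / ε) * F p.2) :=
    (((measurable_fst.sub measurable_snd).abs).mul
      (hKmeas.comp ((measurable_fst.sub measurable_snd).div_const ε))).mul
      (hFcont.measurable.comp measurable_snd)
  have hA : Integrable (fun p : ℝ × ℝ => |p.1 - p.2| * K ((p.1 - p.2) / ε) * F p.2)
      (volume.prod volume) := by
    refine (integrable_prod_iff' hmeasA.aestronglyMeasurable).mpr ⟨?_, ?_⟩
    · exact Filter.Eventually.of_forall fun z' =>
        (habsKε.comp_sub_right z').mul_const (F z')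
    · have : (fun z' : ℝ => ∫ z : ℝ, ‖|z - z'| * K ((z - z') / ε) * F z'‖)
          = fun z' : ℝ => (ε * (ε * M)) * F z' := by
        funext z'
        have hnn : ∀ z : ℝ, 0 ≤ |z - z'| * K ((z - z') / ε) * F z' :=
          fun z => mul_nonneg (mul_nonneg (abs_nonneg _) (hKnn _)) (hFnn _)
        simp only [Real.norm_of_nonneg (hnn _)]
        rw [integral_mul_const, habsshift2]
      rw [this]
      exact hFint.const_mul _
  have hmeasB : Measurable (fun p : ℝ × ℝ => |p.2| * K ((p.1 - p.2) / ε) * F p.2) :=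
    ((measurable_snd.abs).mul
      (hKmeas.comp ((measurable_fst.sub measurable_snd).div_const ε))).mul
      (hFcont.measurable.comp measurable_snd)
  have hB : Integrable (fun p : ℝ × ℝ => |p.2| * K ((p.1 - p.2) / ε) * F p.2)
      (volume.prod volume) := by
    refine (integrable_prod_iff' hmeasB.aestronglyMeasurable).mpr ⟨?_, ?_⟩
    · exact Filter.Eventually.of_forall fun z' =>
        ((hKε.comp_sub_right z').const_mul (|z'|)).mul_const (F z')
    · have : (fun z' : ℝ => ∫ z : ℝ, ‖|z'| * K ((z - z') / ε) * F z'‖)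
          = fun z' : ℝ => ε * (|z'| * F z') := by
        funext z'
        have hnn : ∀ z : ℝ, 0 ≤ |z'| * K ((z - z') / ε) * F z' :=
          fun z => mul_nonneg (mul_nonneg (abs_nonneg _) (hKnn _)) (hFnn _)
        simp only [Real.norm_of_nonneg (hnn _)]
        have h3 : (fun z : ℝ => |z'| * K ((z - z') / ε) * F z')
            = fun z : ℝ => (|z'| * F z') * K ((z - z') / ε) := by
          funext z; ring
        rw [h3, integral_const_mul, hshift]; ring
      rw [this]
      refine (Integrable.const_mul ?_ ε)
      have := hzFint.abs
      refine this.congr (Filter.Eventually.of_forall fun z' => ?_)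
      show |z' * F z'| = |z'| * F z'
      rw [abs_mul, abs_of_nonneg (hFnn z')]
  have hmeas1 : Measurable (fun p : ℝ × ℝ => p.1 * (K ((p.1 - p.2) / ε) * F p.2)) :=
    measurable_fst.mul hmeasprod
  have hf1_prod : Integrable
      (Function.uncurry fun z z' : ℝ => z * (K ((z - z') / ε) * F z'))
      (volume.prod volume) := by
    refine Integrable.mono (hA.add hB) hmeas1.aestronglyMeasurable
      (Filter.Eventually.of_forall fun p => ?_)
    simp only [Function.uncurry, Pi.add_apply]
    have hKF : 0 ≤ K ((p.1 - p.2) / ε) * F p.2 := mul_nonneg (hKnn _) (hFnn _)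
    have h1 : ‖p.1 * (K ((p.1 - p.2) / ε) * F p.2)‖
        = |p.1| * (K ((p.1 - p.2) / ε) * F p.2) := by
      rw [norm_mul, Real.norm_of_nonneg hKF]; rfl
    have h2 : |p.1| ≤ |p.1 - p.2| + |p.2| := by
      calc |p.1| = |(p.1 - p.2) + p.2| := by ring_nf
      _ ≤ |p.1 - p.2| + |p.2| := abs_add_le _ _
    rw [h1]
    have h3 : |p.1| * (K ((p.1 - p.2) / ε) * F p.2)
        ≤ (|p.1 - p.2| + |p.2|) * (K ((p.1 - p.2) / ε) * F p.2) :=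
      mul_le_mul_of_nonneg_right h2 hKF
    refine h3.trans (le_of_eq ?_)
    have h4 : (|p.1 - p.2| + |p.2|) * (K ((p.1 - p.2) / ε) * F p.2)
        = |p.1 - p.2| * K ((p.1 - p.2) / ε) * F p.2
          + |p.2| * K ((p.1 - p.2) / ε) * F p.2 := by ring
    rw [h4]
    rw [Real.norm_of_nonneg]
    exact add_nonneg (mul_nonneg (mul_nonneg (abs_nonneg _) (hKnn _)) (hFnn _))
      (mul_nonneg (mul_nonneg (abs_nonneg _) (hKnn _)) (hFnn _))
  have hslice_int1 : ∀ z' : ℝ, ∫ z : ℝ, z * (K ((z - z') / ε) * F z')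
      = ε * (z' * F z') := by
    intro z'
    have h3 : (fun z : ℝ => z * (K ((z - z') / ε) * F z'))
        = fun z : ℝ => (z * K ((z - z') / ε)) * F z' := by
      funext z; ring
    rw [h3, integral_mul_const, hshiftz]; ring
  have hT2 : ∫ z : ℝ, z * ((1 / ε) * ∫ z' : ℝ, K ((z - z') / ε) * F z')
      = ∫ z : ℝ, z * F z := by
    have hpt : (fun z : ℝ => z * ((1 / ε) * ∫ z' : ℝ, K ((z - z') / ε) * F z'))
        = fun z : ℝ => (1 / ε) * ∫ z' : ℝ, z * (K ((z - z') / ε) * F z') := by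
      funext z
      rw [integral_const_mul]; ring
    rw [hpt, integral_const_mul, integral_integral_swap hf1_prod]
    simp only [hslice_int1]
    rw [integral_const_mul]
    field_simp
  -- ## Part 4: integrating the stationary equation
  set I1 : ℝ := ∫ z : ℝ, z * F z with hI1
  set J : ℝ := ∫ z : ℝ, m z * F z with hJ
  set Jz : ℝ := ∫ z : ℝ, z * m z * F z with hJz
  have hLHSeq : (fun z : ℝ => lam * F z - ε * c * deriv F z + m z * F z)
      = fun z : ℝ => (1 / ε) * ∫ z' : ℝ, K ((z - z') / ε) * F z' := funext heq
  have hE3 : lam * ρ + J = ρ := by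
    have h1 : ∫ z : ℝ, (lam * F z - ε * c * deriv F z + m z * F z) = ∫ z : ℝ, F z := by
      rw [hLHSeq, hT1]
    have hfint : Integrable (fun z : ℝ => lam * F z - ε * c * deriv F z) := by
      exact (hFint.const_mul lam).sub (hF'int.const_mul (ε * c))
    have h2 : ∫ z : ℝ, (lam * F z - ε * c * deriv F z + m z * F z)
        = lam * (∫ z : ℝ, F z) - ε * c * (∫ z : ℝ, deriv F z) + J := by
      rw [integral_add hfint hmFint,
        integral_sub (hFint.const_mul lam) (hF'int.const_mul (ε * c)),
        integral_const_mul, integral_const_mul, ← hJ]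
    rw [h2, hE1, ← hρ] at h1
    linarith
  have hE4 : lam * I1 + ε * c * ρ + Jz = I1 := by
    have h1 : ∫ z : ℝ, z * (lam * F z - ε * c * deriv F z + m z * F z) = I1 := by
      have : (fun z : ℝ => z * (lam * F z - ε * c * deriv F z + m z * F z))
          = fun z : ℝ => z * ((1 / ε) * ∫ z' : ℝ, K ((z - z') / ε) * F z') := by
        funext z; rw [heq z]
      rw [this, hT2, hI1]
    have h2 : ∫ z : ℝ, z * (lam * F z - ε * c * deriv F z + m z * F z)
        = lam * I1 - ε * c * (∫ z : ℝ, z * deriv F z) + Jz := by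
      have hsplit : (fun z : ℝ => z * (lam * F z - ε * c * deriv F z + m z * F z))
          = fun z : ℝ => (lam * (z * F z) - (ε * c) * (z * deriv F z)) + z * m z * F z := by
        funext z; ring
      have hfint1 : Integrable (fun z : ℝ => lam * (z * F z) - ε * c * (z * deriv F z)) := by
        exact (hzFint.const_mul lam).sub (hzF'int.const_mul (ε * c))
      rw [hsplit,
        integral_add hfint1 hzmFint,
        integral_sub (hzFint.const_mul lam) (hzF'int.const_mul (ε * c)),
        integral_const_mul, integral_const_mul, ← hI1, ← hJz]
    rw [h2, hE2] at h1
    linarith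
  -- ## Part 5: conclusion
  have hsplitgoal : ∫ z : ℝ, (z - zbar) * m z * F z = Jz - zbar * J := by
    have h1 : (fun z : ℝ => (z - zbar) * m z * F z)
        = fun z : ℝ => z * m z * F z - zbar * (m z * F z) := by
      funext z; ring
    rw [h1, integral_sub hzmFint (hmFint.const_mul zbar), integral_const_mul, ← hJz, ← hJ]
  have hzbarρ : zbar * ρ = I1 := by
    rw [hzbar]
    field_simp
  rw [hsplitgoal]
  linear_combination hE4 - zbar * hE3 - (1 - lam) * hzbarρ
end

section
/- Let z*, p*, C ∈ ℝ and let G : ℝ → ℝ satisfy 1 + G(z) > 0 for all z ∈ ℝ and |log(1 + G(z* + t))| ≤ C·t² for all t ∈ ℝ. Then for every h ∈ ℝ the series Σ_{n=0}^∞ 2ⁿ·log(1 + G(z* + 2^{−n}·h)) converges absolutely, and the function U₁ defined by U₁(z* + h) = p*·h + Σ_{n=0}^∞ 2ⁿ·log(1 + G(z* + 2^{−n}·h)) solves the corrector equation of the infinitesimal model: for every z ∈ ℝ, U₁(z*) − 2·U₁( (z + z*)/2 ) + U₁(z) = log(1 + G(z)). -/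
/-- Under the quadratic bound `|log(1 + G(z* + t))| ≤ C t²`, the series
`Σ 2ⁿ log(1 + G(z* + 2⁻ⁿ h))` converges absolutely for every `h`, and
`U₁(z* + h) = p* h + Σ 2ⁿ log(1 + G(z* + 2⁻ⁿ h))` solves the corrector equation
`U₁(z*) - 2 U₁((z + z*)/2) + U₁(z) = log(1 + G(z))` of the infinitesimal model. -/
theorem stmt15 (zstar pstar C : ℝ) (G : ℝ → ℝ)
    (hpos : ∀ z : ℝ, 0 < 1 + G z)
    (hbound : ∀ t : ℝ, |Real.log (1 + G (zstar + t))| ≤ C * t ^ 2) :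
    (∀ h : ℝ, Summable (fun n : ℕ => |(2 : ℝ) ^ n * Real.log (1 + G (zstar + h / 2 ^ n))|)) ∧
    (let U₁ : ℝ → ℝ := fun z =>
        pstar * (z - zstar)
          + ∑' n : ℕ, (2 : ℝ) ^ n * Real.log (1 + G (zstar + (z - zstar) / 2 ^ n));
      ∀ z : ℝ, U₁ zstar - 2 * U₁ ((z + zstar) / 2) + U₁ z = Real.log (1 + G z)) := by
  set f : ℝ → ℕ → ℝ := fun h n => (2 : ℝ) ^ n * Real.log (1 + G (zstar + h / 2 ^ n)) with hf
  have habs : ∀ h : ℝ, Summable (fun n : ℕ => |f h n|) := by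
    intro h
    apply Summable.of_nonneg_of_le (fun n => abs_nonneg _) (fun n => ?_)
      (((summable_geometric_of_lt_one (by norm_num) (by norm_num : (1:ℝ)/2 < 1)).mul_left
        (C * h ^ 2)))
    have h2 : (0:ℝ) ≤ (2:ℝ) ^ n := by positivity
    calc |f h n| = (2:ℝ) ^ n * |Real.log (1 + G (zstar + h / 2 ^ n))| := by
          rw [hf]; rw [abs_mul, abs_of_nonneg h2]
      _ ≤ (2:ℝ) ^ n * (C * (h / 2 ^ n) ^ 2) :=
          mul_le_mul_of_nonneg_left (hbound _) h2
      _ = C * h ^ 2 * ((1:ℝ)/2) ^ n := by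
          have : ((2:ℝ) ^ n) ≠ 0 := by positivity
          field_simp
          have h12 : ((1:ℝ)/2) ^ n * 2 ^ n = 1 := by rw [← mul_pow]; norm_num
          linear_combination (-(C * h ^ 2)) * h12
  refine ⟨habs, ?_⟩
  intro U₁ z
  have hsum : ∀ h : ℝ, Summable (f h) := fun h => (habs h).of_abs
  have hlogz : Real.log (1 + G zstar) = 0 := by
    have hb := hbound 0
    simp only [ne_eq, OfNat.ofNat_ne_zero, not_false_eq_true, zero_pow, mul_zero,
      add_zero] at hb
    have := le_antisymm hb (abs_nonneg _)
    exact abs_eq_zero.mp this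
  -- each term at h = 0 is zero
  have hzero : (∑' n : ℕ, (2:ℝ) ^ n * Real.log (1 + G (zstar + 0 / 2 ^ n))) = 0 := by
    simp [hlogz]
  -- key telescoping identity
  have key : ∀ h : ℝ, (∑' n : ℕ, f h n)
      = Real.log (1 + G (zstar + h)) + 2 * ∑' n : ℕ, f (h/2) n := by
    intro h
    have h0 : (∑' n : ℕ, f h n) = f h 0 + ∑' n : ℕ, f h (n + 1) :=
      Summable.tsum_eq_zero_add (hsum h)
    have hshift : ∀ n : ℕ, f h (n + 1) = 2 * f (h/2) n := by
      intro n
      simp only [hf]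
      have : h / 2 ^ (n + 1) = (h / 2) / 2 ^ n := by
        rw [pow_succ]; ring
      rw [this, pow_succ]; ring
    have : (∑' n : ℕ, f h (n + 1)) = 2 * ∑' n : ℕ, f (h/2) n := by
      simp only [hshift]
      exact tsum_mul_left
    rw [h0, this, hf]
    norm_num
  have hz2 : (z + zstar) / 2 - zstar = (z - zstar) / 2 := by ring
  have hkey := key (z - zstar)
  simp only [hf] at hkey
  simp only [U₁, hz2]
  rw [sub_self zstar, hzero, hkey]
  have hzz : zstar + (z - zstar) = z := by ring
  rw [hzz]
  ring
end

section
/- Let m : ℝ → ℝ be differentiable, let U₁ : ℝ → ℝ be differentiable, and let λ₀, c, z₀* ∈ ℝ be such that λ₀ + c·(z − z₀*) + m(z) > 0 for all z ∈ ℝ and, for every z ∈ ℝ, log( λ₀ + c·(z − z₀*) + m(z) ) = U₁(z₀*) − 2·U₁( (z + z₀*)/2 ) + U₁(z). Then the mean fitness and the evolutionary lag of the infinitesimal model satisfy λ₀ = 1 − m(z₀*) and c = −m'(z₀*). -/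
/-- From the corrector equation
`log(λ₀ + c (z - z₀*) + m(z)) = U₁(z₀*) - 2 U₁((z + z₀*)/2) + U₁(z)` of the
infinitesimal model, one deduces the demographic equilibrium `λ₀ = 1 - m(z₀*)`
and the evolutionary equilibrium `c = -m'(z₀*)`. -/
theorem stmt16 (m : ℝ → ℝ) (hm : Differentiable ℝ m)
    (U₁ : ℝ → ℝ) (hU₁ : Differentiable ℝ U₁)
    (lam0 c z0 : ℝ)
    (hpos : ∀ z : ℝ, 0 < lam0 + c * (z - z0) + m z)
    (heq : ∀ z : ℝ, Real.log (lam0 + c * (z - z0) + m z)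
      = U₁ z0 - 2 * U₁ ((z + z0) / 2) + U₁ z) :
    lam0 = 1 - m z0 ∧ c = -deriv m z0 := by
  have hmid : ((z0 + z0) / 2 : ℝ) = z0 := by ring
  have h1 : lam0 + m z0 = 1 := by
    have h' : Real.log (lam0 + c * (z0 - z0) + m z0) = 0 := by
      rw [heq z0, hmid]; ring
    have hp := hpos z0
    have hexp := Real.exp_log hp
    rw [h', Real.exp_zero] at hexp
    have : lam0 + c * (z0 - z0) + m z0 = lam0 + m z0 := by ring
    linarith [this ▸ hexp]
  refine ⟨by linarith, ?_⟩
  set f := fun z => lam0 + c * (z - z0) + m z with hfdef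
  have hf : HasDerivAt f (c + deriv m z0) z0 := by
    have ha : HasDerivAt (fun z : ℝ => c * (z - z0)) c z0 := by
      simpa using ((hasDerivAt_id z0).sub_const z0).const_mul c
    exact (ha.const_add lam0).add (hm z0).hasDerivAt
  have hfz0 : f z0 = 1 := by simp only [hfdef]; ring_nf; linarith
  have hlog : HasDerivAt (fun z => Real.log (f z)) ((c + deriv m z0) / f z0) z0 :=
    hf.log (ne_of_gt (hpos z0))
  have hg : HasDerivAt (fun z => U₁ z0 - 2 * U₁ ((z + z0) / 2) + U₁ z)
      (-(2 * (deriv U₁ z0 * (1 / 2))) + deriv U₁ z0) z0 := by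
    have hin : HasDerivAt (fun z : ℝ => (z + z0) / 2) (1 / 2) z0 := by
      simpa using ((hasDerivAt_id z0).add_const z0).div_const 2
    have hcomp : HasDerivAt (fun z => U₁ ((z + z0) / 2))
        (deriv U₁ ((z0 + z0) / 2) * (1 / 2)) z0 :=
      (hU₁ _).hasDerivAt.comp z0 hin
    rw [hmid] at hcomp
    exact ((hcomp.const_mul 2).const_sub (U₁ z0)).add (hU₁ z0).hasDerivAt
  have heqfun : (fun z => Real.log (f z)) = fun z => U₁ z0 - 2 * U₁ ((z + z0) / 2) + U₁ z :=
    funext heq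
  rw [heqfun] at hlog
  have huniq := hlog.unique hg
  rw [hfz0, div_one] at huniq
  linarith
end

section
/- For every real p with 0 < |p| < √2, the following chain of inequalities holds between the Hamiltonians (Laplace transforms minus 1) of unit-variance mutation kernels of increasing kurtosis — diffusion approximation, uniform kernel, Gaussian kernel, and double-exponential (Laplace) kernel: 1 + p²/2 ≤ sinh(√3·p)/(√3·p) ≤ exp(p²/2) ≤ 1/(1 − p²/2). -/
open Real Nat

lemma exp_hasSum (x : ℝ) : HasSum (fun n : ℕ => x ^ n / (n ! : ℝ)) (Real.exp x) := by
  have h := (Real.summable_pow_div_factorial x).hasSum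
  have hx : ∑' n : ℕ, x ^ n / (n ! : ℝ) = Real.exp x := by
    rw [Real.exp_eq_exp_ℝ, NormedSpace.exp_eq_tsum_div]
  rwa [hx] at h

lemma sinh_hasSum (q : ℝ) :
    HasSum (fun k : ℕ => q ^ (2 * k + 1) / ((2 * k + 1)! : ℝ)) (Real.sinh q) := by
  set g : ℕ → ℝ := fun n => (q ^ n - (-q) ^ n) / 2 / (n ! : ℝ) with hg_def
  have hg : HasSum g (Real.sinh q) := by
    have h := ((exp_hasSum q).sub (exp_hasSum (-q))).div_const 2
    have h1 : (fun n : ℕ => (q ^ n / (n ! : ℝ) - (-q) ^ n / (n ! : ℝ)) / 2) = g := by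
      funext n; simp [hg_def]; ring
    rw [h1, ← Real.sinh_eq] at h
    exact h
  have heven : HasSum (fun k : ℕ => g (2 * k)) 0 := by
    have : (fun k : ℕ => g (2 * k)) = fun _ => (0 : ℝ) := by
      funext k
      simp only [hg_def]
      rw [Even.neg_pow (even_two_mul k)]
      simp
    rw [this]
    exact hasSum_zero
  have hodd_summable : Summable (fun k : ℕ => g (2 * k + 1)) := by
    have hinj : Function.Injective (fun k : ℕ => 2 * k + 1) := by
      intro a b h; simpa using h
    exact hg.summable.comp_injective hinj
  obtain ⟨t, ht⟩ := hodd_summable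
  have := (HasSum.even_add_odd heven ht).unique hg
  rw [zero_add] at this
  subst this
  have h2 : (fun k : ℕ => g (2 * k + 1)) =
      fun k : ℕ => q ^ (2 * k + 1) / ((2 * k + 1)! : ℝ) := by
    funext k
    simp only [hg_def]
    rw [Odd.neg_pow ⟨k, by ring⟩]
    ring
  rwa [h2] at ht

lemma fact_ineq (k : ℕ) : 6 ^ k * k ! ≤ (2 * k + 1)! := by
  induction k with
  | zero => simp
  | succ n ih =>
    have h1 : (2 * (n + 1) + 1)! = (2 * n + 3) * ((2 * n + 2) * (2 * n + 1)!) := by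
      have : 2 * (n + 1) + 1 = (2 * n + 2) + 1 := by ring
      rw [this, Nat.factorial_succ, Nat.factorial_succ]
    calc 6 ^ (n + 1) * (n + 1)! = 6 * (n + 1) * (6 ^ n * n !) := by
          rw [pow_succ, Nat.factorial_succ]; ring
      _ ≤ 6 * (n + 1) * (2 * n + 1)! := by
          exact Nat.mul_le_mul_left _ ih
      _ ≤ (2 * n + 3) * ((2 * n + 2) * (2 * n + 1)!) := by
          rw [← mul_assoc]
          apply Nat.mul_le_mul_right
          nlinarith
      _ = (2 * (n + 1) + 1)! := h1.symm

/-- Ordering of the Hamiltonians of unit-variance mutation kernels of increasing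
kurtosis (diffusion approximation, uniform, Gaussian, double-exponential): for
`0 < |p| < √2`, `1 + p²/2 ≤ sinh(√3 p)/(√3 p) ≤ exp(p²/2) ≤ 1/(1 - p²/2)`. -/
theorem stmt17 (p : ℝ) (hp : 0 < |p|) (hp2 : |p| < Real.sqrt 2) :
    1 + p ^ 2 / 2 ≤ Real.sinh (Real.sqrt 3 * p) / (Real.sqrt 3 * p) ∧
    Real.sinh (Real.sqrt 3 * p) / (Real.sqrt 3 * p) ≤ Real.exp (p ^ 2 / 2) ∧
    Real.exp (p ^ 2 / 2) ≤ 1 / (1 - p ^ 2 / 2) := by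
  have hpne : p ≠ 0 := by
    intro h; rw [h] at hp; simp at hp
  have hp2pos : 0 < p ^ 2 := by positivity
  have hplt : p ^ 2 < 2 := by
    have h1 : |p| ^ 2 < Real.sqrt 2 ^ 2 :=
      pow_lt_pow_left₀ hp2 (abs_nonneg p) (by norm_num)
    rwa [sq_abs, Real.sq_sqrt (by norm_num : (2:ℝ) ≥ 0)] at h1
  set q : ℝ := Real.sqrt 3 * p with hq_def
  have hs3 : Real.sqrt 3 ^ 2 = 3 := Real.sq_sqrt (by norm_num)
  have hqne : q ≠ 0 := by
    apply mul_ne_zero _ hpne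
    positivity
  have hq2 : q ^ 2 = 3 * p ^ 2 := by
    rw [hq_def, mul_pow, hs3]
  -- the series for sinh q / q
  have hS : HasSum (fun k : ℕ => (3 * p ^ 2) ^ k / ((2 * k + 1)! : ℝ))
      (Real.sinh q / q) := by
    have h := (sinh_hasSum q).div_const q
    have h1 : (fun k : ℕ => q ^ (2 * k + 1) / ((2 * k + 1)! : ℝ) / q) =
        fun k : ℕ => (3 * p ^ 2) ^ k / ((2 * k + 1)! : ℝ) := by
      funext k
      rw [pow_succ, pow_mul, hq2]
      field_simp
    rwa [h1] at h
  have hE : HasSum (fun k : ℕ => (p ^ 2 / 2) ^ k / (k ! : ℝ)) (Real.exp (p ^ 2 / 2)) :=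
    exp_hasSum _
  refine ⟨?_, ?_, ?_⟩
  · -- lower bound by first two terms
    have h := sum_le_hasSum (Finset.range 2)
      (fun i _ => by positivity) hS
    have h2 : ∑ i ∈ Finset.range 2, (3 * p ^ 2) ^ i / ((2 * i + 1)! : ℝ)
        = 1 + p ^ 2 / 2 := by
      simp [Finset.sum_range_succ, Nat.factorial]
      ring
    linarith [h2 ▸ h]
  · -- termwise comparison
    apply hasSum_le _ hS hE
    intro k
    have hfact : (6 : ℝ) ^ k * k ! ≤ ((2 * k + 1)! : ℝ) := by
      exact_mod_cast fact_ineq k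
    have hk1 : (0 : ℝ) < k ! := by positivity
    have hk2 : (0 : ℝ) < (2 * k + 1)! := by positivity
    rw [div_le_div_iff₀ hk2 hk1]
    have h6 : (6 : ℝ) ^ k = 2 ^ k * 3 ^ k := by
      rw [show (6:ℝ) = 2 * 3 by norm_num, mul_pow]
    have h3 : (3 * p ^ 2) ^ k * k ! = (p ^ 2 / 2) ^ k * (6 ^ k * k !) := by
      rw [mul_pow, div_pow, h6]
      field_simp
    rw [h3]
    apply mul_le_mul_of_nonneg_left hfact
    positivity
  · -- exp x ≤ 1/(1-x)
    set x : ℝ := p ^ 2 / 2 with hx_def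
    have hx1 : 0 < 1 - x := by
      simp only [hx_def]; linarith
    have h1 : 1 - x ≤ Real.exp (-x) := by
      have := Real.add_one_le_exp (-x)
      linarith
    rw [le_div_iff₀ hx1]
    calc Real.exp x * (1 - x) ≤ Real.exp x * Real.exp (-x) :=
          mul_le_mul_of_nonneg_left h1 (Real.exp_pos x).le
      _ = 1 := by rw [← Real.exp_add]; simp
end

section
/- Let U : ℝ → ℝ be continuous and twice continuously differentiable, with a unique global minimum point z* such that U''(z*) > 0 and U(z) > U(z*) for all z ≠ z*, with U(z) → +∞ as z → ±∞, and such that z ↦ (1 + z²)·exp(−U(z)) is integrable on ℝ. Then the rescaled variance of the tilted densities Fε(z) = exp(−U(z)/ε) satisfies: ( ∫_ℝ (z − z*)²·exp(−U(z)/ε) dz ) / ( ε·∫_ℝ exp(−U(z)/ε) dz ) → 1/U''(z*) as ε → 0⁺. -/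
open MeasureTheory

open Filter Real Set

lemma cov18 (f : ℝ → ℝ) (c b : ℝ) (hc : 0 < c) :
    ∫ z : ℝ, f z = c * ∫ y : ℝ, f (c * y + b) := by
  have h2 : (∫ y : ℝ, (fun x => f (x + b)) (c * y)) = |c⁻¹| • ∫ x : ℝ, f (x + b) :=
    MeasureTheory.Measure.integral_comp_mul_left (fun x => f (x + b)) c
  simp only [MeasureTheory.integral_add_right_eq_self] at h2
  rw [show (fun y : ℝ => f (c * y + b)) = fun y : ℝ => (fun x => f (x + b)) (c * y) from rfl]
  rw [h2, abs_of_pos (inv_pos.mpr hc), smul_eq_mul, ← mul_assoc, mul_inv_cancel₀ hc.ne', one_mul]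

lemma gauss18 (a : ℝ) (ha : 0 < a) :
    (∫ y : ℝ, y ^ 2 * Real.exp (-(a / 2) * y ^ 2)) =
      (1 / a) * ∫ y : ℝ, Real.exp (-(a / 2) * y ^ 2) := by
  set b := a / 2 with hbdef
  have hb : 0 < b := by positivity
  have h0 : (∫ y : ℝ, Real.exp (-b * y ^ 2)) = Real.sqrt (π / b) := integral_gaussian b
  have h2 : (∫ y : ℝ, y ^ 2 * Real.exp (-b * y ^ 2)) =
      2 * ∫ x in Ioi (0:ℝ), x ^ 2 * Real.exp (-b * x ^ 2) := by
    rw [← integral_comp_abs (f := fun x => x ^ 2 * Real.exp (-b * x ^ 2))]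
    congr 1; funext y; rw [sq_abs]
  have h3 : (∫ x in Ioi (0:ℝ), x ^ 2 * Real.exp (-b * x ^ 2)) =
      b ^ (-(3:ℝ)/2) * (1/2) * Real.Gamma (3/2) := by
    have h := integral_rpow_mul_exp_neg_mul_rpow (p := 2) (q := 2) two_pos (by norm_num) hb
    have hcong : (∫ x in Ioi (0:ℝ), x ^ (2:ℝ) * Real.exp (-b * x ^ (2:ℝ))) =
        ∫ x in Ioi (0:ℝ), x ^ 2 * Real.exp (-b * x ^ 2) := by
      refine setIntegral_congr_fun measurableSet_Ioi fun x hx => ?_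
      rw [show (2:ℝ) = ((2:ℕ):ℝ) by norm_num, Real.rpow_natCast]
    rw [hcong] at h
    rw [h]; norm_num
  have hG : Real.Gamma (3/2) = Real.sqrt π / 2 := by
    have h := Real.Gamma_add_one (by norm_num : (1/2:ℝ) ≠ 0)
    rw [Real.Gamma_one_half_eq] at h
    rw [show (3/2:ℝ) = 1/2 + 1 by norm_num, h]; ring
  rw [h2, h3, h0, hG]
  have e1 : Real.sqrt (π / b) = Real.sqrt π / Real.sqrt b := Real.sqrt_div pi_pos.le b
  have e3 : b ^ ((3:ℝ)/2) = Real.sqrt b * b := by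
    have h : b ^ ((3:ℝ)/2) = b ^ ((1:ℝ)/2) * b ^ (1:ℝ) := by
      rw [← Real.rpow_add hb]; norm_num
    rw [h, Real.rpow_one, ← Real.sqrt_eq_rpow]
  have e2 : b ^ (-(3:ℝ)/2) = (Real.sqrt b * b)⁻¹ := by
    rw [show (-(3:ℝ)/2) = -((3:ℝ)/2) by ring, Real.rpow_neg hb.le, e3]
  have haa : a = 2 * b := by rw [hbdef]; ring
  have hsb : Real.sqrt b ≠ 0 := (Real.sqrt_pos.mpr hb).ne'
  rw [e2, haa, e1]
  field_simp

lemma taylor18 (U : ℝ → ℝ) (hU : ContDiff ℝ 2 U) (zstar : ℝ) (hUz : U zstar = 0)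
    (hd0 : deriv U zstar = 0) :
    Tendsto (fun h : ℝ => U (h + zstar) / h ^ 2) (nhdsWithin 0 {(0:ℝ)}ᶜ)
      (nhds (deriv (deriv U) zstar / 2)) := by
  have hdU : Differentiable ℝ U := hU.differentiable (by norm_num)
  have h2 : ContDiff ℝ (1 + 1) U := by rw [one_add_one_eq_two]; exact hU
  have hdU' : Differentiable ℝ (deriv U) := ((contDiff_succ_iff_deriv.mp h2).2.2).differentiable one_ne_zero
  -- slope limit for deriv U at zstar
  have hslope : Tendsto (fun h : ℝ => deriv U (h + zstar) / h) (nhdsWithin 0 {(0:ℝ)}ᶜ)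
      (nhds (deriv (deriv U) zstar)) := by
    have h1 : Tendsto (slope (deriv U) zstar) (nhdsWithin zstar {zstar}ᶜ)
        (nhds (deriv (deriv U) zstar)) :=
      hasDerivAt_iff_tendsto_slope.mp ((hdU' zstar).hasDerivAt)
    have hmap : Tendsto (fun h : ℝ => h + zstar) (nhdsWithin 0 {(0:ℝ)}ᶜ)
        (nhdsWithin zstar {zstar}ᶜ) := by
      apply Tendsto.inf
      · simpa using (continuous_add_right zstar).tendsto (0:ℝ)
      · refine tendsto_principal_principal.mpr fun h hh => ?_
        simp only [mem_compl_iff, mem_singleton_iff] at *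
        intro hc; exact hh (by linarith)
    have := h1.comp hmap
    refine this.congr fun h => ?_
    simp [slope_def_field, hd0, div_eq_div_iff]
  -- L'Hopital
  have := HasDerivAt.lhopital_zero_nhdsNE (a := (0:ℝ))
    (f := fun h => U (h + zstar)) (f' := fun h => deriv U (h + zstar))
    (g := fun h : ℝ => h ^ 2) (g' := fun h : ℝ => 2 * h)
    (l := nhds (deriv (deriv U) zstar / 2))
    (Eventually.of_forall fun h => by
      have : HasDerivAt (fun h : ℝ => U (h + zstar)) (deriv U (h + zstar) * 1) h :=
        ((hdU (h + zstar)).hasDerivAt).comp h ((hasDerivAt_id h).add_const zstar)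
      simpa using this)
    (Eventually.of_forall fun h => by simpa using hasDerivAt_pow 2 h)
    ?_ ?_ ?_ ?_
  · exact this
  · refine eventually_nhdsWithin_of_forall fun h hh => ?_
    simp only [mem_compl_iff, mem_singleton_iff] at hh
    exact mul_ne_zero two_ne_zero hh
  · have : Tendsto (fun h : ℝ => U (h + zstar)) (nhds 0) (nhds 0) := by
      have hc : Continuous (fun h : ℝ => U (h + zstar)) :=
        hU.continuous.comp (continuous_id.add continuous_const)
      simpa [hUz] using hc.tendsto (0:ℝ)
    exact this.mono_left nhdsWithin_le_nhds
  · have : Tendsto (fun h : ℝ => h ^ 2) (nhds (0:ℝ)) (nhds 0) := by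
      simpa using (continuous_pow 2).tendsto (0:ℝ)
    exact this.mono_left nhdsWithin_le_nhds
  · refine (hslope.div_const 2).congr fun h => ?_
    rw [div_div, mul_comm]

lemma dct18 (U : ℝ → ℝ) (hcont : Continuous U) (hU : ContDiff ℝ 2 U) (zstar : ℝ)
    (hUz : U zstar = 0) (hd0 : deriv U zstar = 0)
    (ha : 0 < deriv (deriv U) zstar) (δ : ℝ) (hδ : 0 < δ)
    (hquad : ∀ h : ℝ, |h| ≤ δ → deriv (deriv U) zstar / 4 * h ^ 2 ≤ U (h + zstar))
    (P : ℝ → ℝ) (hP : Continuous P) (hPnn : ∀ y, 0 ≤ P y)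
    (hPint : Integrable (fun y : ℝ => P y * Real.exp (-(deriv (deriv U) zstar / 4) * y ^ 2))) :
    Tendsto (fun ε : ℝ => ∫ y : ℝ,
        ({y : ℝ | |Real.sqrt ε * y| ≤ δ}.indicator
          (fun y => P y * Real.exp (-U (Real.sqrt ε * y + zstar) / ε))) y)
      (nhdsWithin 0 (Set.Ioi 0))
      (nhds (∫ y : ℝ, P y * Real.exp (-(deriv (deriv U) zstar / 2) * y ^ 2))) := by
  set a := deriv (deriv U) zstar with hadef
  have hQ := taylor18 U hU zstar hUz hd0
  apply tendsto_integral_filter_of_dominated_convergence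
    (bound := fun y : ℝ => P y * Real.exp (-(a / 4) * y ^ 2))
  · -- measurability
    refine Eventually.of_forall fun ε => ?_
    have hclosed : IsClosed {y : ℝ | |Real.sqrt ε * y| ≤ δ} :=
      isClosed_le ((continuous_const.mul continuous_id).abs) continuous_const
    exact ((hP.mul (Real.continuous_exp.comp
      ((hcont.comp ((continuous_const.mul continuous_id).add continuous_const)).neg.div_const
        ε))).aestronglyMeasurable).indicator hclosed.measurableSet
  · -- bound
    filter_upwards [self_mem_nhdsWithin] with ε hε
    refine Eventually.of_forall fun y => ?_
    rw [Set.indicator_apply]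
    split_ifs with hy
    · have hεpos : (0:ℝ) < ε := hε
      have hh : |Real.sqrt ε * y| ≤ δ := hy
      have hq := hquad (Real.sqrt ε * y) hh
      have hsq : (Real.sqrt ε * y) ^ 2 = ε * y ^ 2 := by
        rw [mul_pow, Real.sq_sqrt hεpos.le]
      rw [hsq] at hq
      have hle : -U (Real.sqrt ε * y + zstar) / ε ≤ -(a / 4) * y ^ 2 := by
        rw [neg_div, neg_mul, neg_le_neg_iff, le_div_iff₀ hεpos]
        calc a / 4 * y ^ 2 * ε = a / 4 * (ε * y ^ 2) := by ring
        _ ≤ U (Real.sqrt ε * y + zstar) := hq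
      have h1 : P y * Real.exp (-U (Real.sqrt ε * y + zstar) / ε)
          ≤ P y * Real.exp (-(a / 4) * y ^ 2) :=
        mul_le_mul_of_nonneg_left (Real.exp_le_exp.mpr hle) (hPnn y)
      rw [Real.norm_eq_abs, abs_of_nonneg (mul_nonneg (hPnn y) (Real.exp_nonneg _))]
      exact h1
    · simp only [norm_zero]
      exact mul_nonneg (hPnn y) (Real.exp_nonneg _)
  · exact hPint
  · -- pointwise limit
    refine Eventually.of_forall fun y => ?_
    by_cases hy0 : y = 0
    · subst hy0
      have heq : ∀ ε : ℝ, ({y : ℝ | |Real.sqrt ε * y| ≤ δ}.indicator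
          (fun y => P y * Real.exp (-U (Real.sqrt ε * y + zstar) / ε))) 0
          = P 0 * Real.exp (-U zstar / ε) := by
        intro ε
        rw [Set.indicator_of_mem]
        · norm_num
        · simp [abs_of_nonneg, hδ.le]
      simp only [heq, hUz, neg_zero, zero_div, Real.exp_zero]
      norm_num
    · -- y ≠ 0
      have hmap : Tendsto (fun ε : ℝ => Real.sqrt ε * y)
          (nhdsWithin 0 (Set.Ioi 0)) (nhdsWithin 0 {(0:ℝ)}ᶜ) := by
        rw [tendsto_nhdsWithin_iff]
        refine ⟨?_, ?_⟩
        · have : Tendsto (fun ε : ℝ => Real.sqrt ε * y) (nhds 0) (nhds 0) := by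
            have := (Real.continuous_sqrt.tendsto (0:ℝ)).mul_const y
            simpa using this
          exact this.mono_left nhdsWithin_le_nhds
        · filter_upwards [self_mem_nhdsWithin] with ε hε
          simp only [Set.mem_compl_iff, Set.mem_singleton_iff]
          exact fun hc => hy0 (by
            have : Real.sqrt ε ≠ 0 := (Real.sqrt_pos.mpr hε).ne'
            exact (mul_eq_zero.mp hc).resolve_left this)
      have hUdiv : Tendsto (fun ε : ℝ => U (Real.sqrt ε * y + zstar) / ε)
          (nhdsWithin 0 (Set.Ioi 0)) (nhds (a / 2 * y ^ 2)) := by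
        have h1 := (hQ.comp hmap).mul_const (y ^ 2)
        refine h1.congr' ?_
        filter_upwards [self_mem_nhdsWithin] with ε hε
        have hεpos : (0:ℝ) < ε := hε
        have hy2 : y ^ 2 ≠ 0 := pow_ne_zero 2 hy0
        simp only [Function.comp_apply]
        rw [mul_pow, Real.sq_sqrt hεpos.le]
        field_simp
      have hexp : Tendsto (fun ε : ℝ => P y * Real.exp (-U (Real.sqrt ε * y + zstar) / ε))
          (nhdsWithin 0 (Set.Ioi 0)) (nhds (P y * Real.exp (-(a / 2) * y ^ 2))) := by
        have h2 : Tendsto (fun ε : ℝ => Real.exp (-(U (Real.sqrt ε * y + zstar) / ε)))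
            (nhdsWithin 0 (Set.Ioi 0)) (nhds (Real.exp (-(a / 2 * y ^ 2)))) :=
          (Real.continuous_exp.tendsto _).comp hUdiv.neg
        have h3 := h2.const_mul (P y)
        simp only [neg_div, neg_mul]
        exact h3
      refine hexp.congr' ?_
      have hpos : (0:ℝ) < (δ / (|y| + 1)) ^ 2 := by positivity
      filter_upwards [Ioo_mem_nhdsGT_of_mem (Set.left_mem_Ico.mpr hpos)] with ε hε
      have hεpos : (0:ℝ) < ε := hε.1
      have h4 : Real.sqrt ε ≤ δ / (|y| + 1) := by
        have := Real.sqrt_le_sqrt hε.2.le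
        rwa [Real.sqrt_sq (by positivity)] at this
      have hmem : |Real.sqrt ε * y| ≤ δ := by
        rw [abs_mul, abs_of_nonneg (Real.sqrt_nonneg ε)]
        have h5 : Real.sqrt ε * |y| ≤ δ / (|y| + 1) * |y| :=
          mul_le_mul_of_nonneg_right h4 (abs_nonneg y)
        have h6 : δ / (|y| + 1) * |y| ≤ δ := by
          rw [div_mul_eq_mul_div, div_le_iff₀ (by positivity : (0:ℝ) < |y| + 1)]
          nlinarith [abs_nonneg y]
        linarith
      exact (Set.indicator_of_mem (show y ∈ {y : ℝ | |Real.sqrt ε * y| ≤ δ} from hmem)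
        (fun y => P y * Real.exp (-U (Real.sqrt ε * y + zstar) / ε))).symm

lemma covS18 (G : ℝ → ℝ) (zstar δ ε : ℝ) (hε : 0 < ε) :
    (∫ z in {z : ℝ | |z - zstar| ≤ δ}, G z) =
      Real.sqrt ε * ∫ y : ℝ,
        ({y : ℝ | |Real.sqrt ε * y| ≤ δ}.indicator (fun y => G (Real.sqrt ε * y + zstar))) y := by
  have hSm : MeasurableSet {z : ℝ | |z - zstar| ≤ δ} :=
    (isClosed_le ((continuous_id.sub continuous_const).abs) continuous_const).measurableSet
  rw [← integral_indicator hSm,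
    cov18 ({z : ℝ | |z - zstar| ≤ δ}.indicator G) (Real.sqrt ε) zstar (Real.sqrt_pos.mpr hε)]
  congr 1
  apply integral_congr_ae
  refine Eventually.of_forall fun y => ?_
  simp only [Set.indicator_apply, Set.mem_setOf_eq, add_sub_cancel_right]

lemma tail18 (U w : ℝ → ℝ) (hUnn : ∀ z, 0 ≤ U z) (wnn : ∀ z, 0 ≤ w z)
    (S : Set ℝ) (hSm : MeasurableSet S) (m : ℝ) (hm : 0 < m)
    (houter : ∀ z ∉ S, m ≤ U z)
    (hCint : Integrable (fun z : ℝ => w z * Real.exp (-U z)))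
    (ε : ℝ) (hε : ε ∈ Set.Ioc (0:ℝ) 1)
    (hIe : Integrable (fun z : ℝ => w z * Real.exp (-U z / ε))) :
    (∫ z in Sᶜ, w z * Real.exp (-U z / ε)) ≤
      Real.exp (-(m / ε)) * (Real.exp m * ∫ z : ℝ, w z * Real.exp (-U z)) := by
  obtain ⟨hεpos, hε1⟩ := hε
  have hinv : 1 ≤ 1 / ε := by
    rw [le_div_iff₀ hεpos]; linarith
  have key : ∀ z ∉ S, w z * Real.exp (-U z / ε) ≤
      (Real.exp (-(m / ε)) * Real.exp m) * (w z * Real.exp (-U z)) := by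
    intro z hz
    have hUz := houter z hz
    have hexp : Real.exp (-U z / ε) ≤ Real.exp (-(m / ε)) * Real.exp m * Real.exp (-U z) := by
      rw [← Real.exp_add, ← Real.exp_add, Real.exp_le_exp]
      have e1 : -U z / ε = -(U z * (1 / ε)) := by ring
      have e2 : -(m / ε) = -(m * (1 / ε)) := by ring
      rw [e1, e2]
      nlinarith [mul_le_mul_of_nonneg_right hUz (sub_nonneg.mpr hinv)]
    calc w z * Real.exp (-U z / ε)
        ≤ w z * (Real.exp (-(m / ε)) * Real.exp m * Real.exp (-U z)) :=
          mul_le_mul_of_nonneg_left hexp (wnn z)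
      _ = (Real.exp (-(m / ε)) * Real.exp m) * (w z * Real.exp (-U z)) := by ring
  calc (∫ z in Sᶜ, w z * Real.exp (-U z / ε))
      ≤ ∫ z in Sᶜ, (Real.exp (-(m / ε)) * Real.exp m) * (w z * Real.exp (-U z)) := by
        refine setIntegral_mono_on hIe.integrableOn
          ((hCint.const_mul _).integrableOn) hSm.compl fun z hz => key z hz
    _ = (Real.exp (-(m / ε)) * Real.exp m) * ∫ z in Sᶜ, w z * Real.exp (-U z) := by
        rw [MeasureTheory.integral_const_mul]
    _ ≤ (Real.exp (-(m / ε)) * Real.exp m) * ∫ z : ℝ, w z * Real.exp (-U z) := by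
        refine mul_le_mul_of_nonneg_left ?_ (by positivity)
        exact setIntegral_le_integral hCint
          (Eventually.of_forall fun z => mul_nonneg (wnn z) (Real.exp_nonneg _))
    _ = Real.exp (-(m / ε)) * (Real.exp m * ∫ z : ℝ, w z * Real.exp (-U z)) := by ring

lemma squeeze18 (T d : ℝ → ℝ) (m C : ℝ) (hm : 0 < m)
    (hb : ∀ᶠ ε in nhdsWithin (0:ℝ) (Set.Ioi 0),
      0 ≤ T ε ∧ T ε ≤ Real.exp (-(m / ε)) * C ∧ ε ^ 2 ≤ d ε ∧ 0 < d ε) :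
    Tendsto (fun ε => T ε / d ε) (nhdsWithin (0:ℝ) (Set.Ioi 0)) (nhds 0) := by
  have h1 : Tendsto (fun ε : ℝ => m / ε) (nhdsWithin (0:ℝ) (Set.Ioi 0)) atTop := by
    have := tendsto_inv_nhdsGT_zero.const_mul_atTop hm
    exact this.congr fun ε => (div_eq_mul_inv m ε).symm
  have h2 : Tendsto (fun ε : ℝ => (m / ε) ^ 2 * Real.exp (-(m / ε)))
      (nhdsWithin (0:ℝ) (Set.Ioi 0)) (nhds 0) :=
    (tendsto_pow_mul_exp_neg_atTop_nhds_zero 2).comp h1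
  have h3 : Tendsto (fun ε : ℝ => (C / m ^ 2) * ((m / ε) ^ 2 * Real.exp (-(m / ε))))
      (nhdsWithin (0:ℝ) (Set.Ioi 0)) (nhds 0) := by
    have := h2.const_mul (C / m ^ 2)
    simpa using this
  apply squeeze_zero' (hb.mono fun ε hε => div_nonneg hε.1 hε.2.2.2.le) _ h3
  filter_upwards [hb, self_mem_nhdsWithin] with ε hε hε0
  have hεpos : (0:ℝ) < ε := hε0
  obtain ⟨hT0, hTle, hd1, hd0⟩ := hε
  calc T ε / d ε ≤ (Real.exp (-(m / ε)) * C) / d ε :=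
        (div_le_div_iff_of_pos_right hd0).mpr hTle
    _ ≤ (Real.exp (-(m / ε)) * C) / ε ^ 2 := by
        apply div_le_div_of_nonneg_left _ (by positivity) hd1
        have : 0 ≤ C := by
          by_contra hC
          push_neg at hC
          have : Real.exp (-(m / ε)) * C < 0 :=
            mul_neg_of_pos_of_neg (Real.exp_pos _) hC
          linarith
        positivity
    _ = (C / m ^ 2) * ((m / ε) ^ 2 * Real.exp (-(m / ε))) := by
        field_simp

lemma alg18 (A2 T2 A0 T0 ε s : ℝ) (hε : 0 < ε) (hs : 0 < s) :
    (A2 + T2 / (ε * s)) / (A0 + T0 / s) = (ε * s * A2 + T2) / (ε * (s * A0 + T0)) := by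
  rw [show ε * (s * A0 + T0) = (ε * s) * (A0 + T0 / s) by field_simp,
      show ε * s * A2 + T2 = (ε * s) * (A2 + T2 / (ε * s)) by field_simp,
      mul_div_mul_left _ _ (by positivity : (ε * s) ≠ 0)]

theorem aux18 (U : ℝ → ℝ) (hcont : Continuous U) (hU : ContDiff ℝ 2 U) (zstar : ℝ)
    (hU'' : 0 < deriv (deriv U) zstar)
    (hmin : ∀ z : ℝ, z ≠ zstar → 0 < U z) (hUz : U zstar = 0)
    (hUtop : Filter.Tendsto U Filter.atTop Filter.atTop)
    (hUbot : Filter.Tendsto U Filter.atBot Filter.atTop)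
    (hint : Integrable (fun z : ℝ => (1 + z ^ 2) * Real.exp (-U z))) :
    Filter.Tendsto (fun ε : ℝ =>
        (∫ z : ℝ, (z - zstar) ^ 2 * Real.exp (-U z / ε)) /
          (ε * ∫ z : ℝ, Real.exp (-U z / ε)))
      (nhdsWithin 0 (Set.Ioi 0)) (nhds (1 / deriv (deriv U) zstar)) := by
  set a := deriv (deriv U) zstar with hadef
  have ha : 0 < a := hU''
  have hUnn : ∀ z, 0 ≤ U z := by
    intro z
    rcases eq_or_ne z zstar with rfl | h
    · rw [hUz]
    · exact (hmin z h).le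
  have hd0 : deriv U zstar = 0 := by
    refine IsLocalMin.deriv_eq_zero ?_
    refine Eventually.of_forall fun z => ?_
    rw [hUz]; exact hUnn z
  have hQ := taylor18 U hU zstar hUz hd0
  -- extract δ
  have hev : ∀ᶠ h in nhdsWithin (0:ℝ) {(0:ℝ)}ᶜ, a / 4 < U (h + zstar) / h ^ 2 :=
    hQ.eventually (eventually_gt_nhds (by rw [← hadef]; linarith))
  rw [eventually_nhdsWithin_iff, Metric.eventually_nhds_iff] at hev
  obtain ⟨δ', hδ'pos, hδ'⟩ := hev
  set δ := δ' / 2 with hδdef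
  have hδ : 0 < δ := by positivity
  have hquad : ∀ h : ℝ, |h| ≤ δ → a / 4 * h ^ 2 ≤ U (h + zstar) := by
    intro h hh
    rcases eq_or_ne h 0 with rfl | hne
    · simp [hUz]
    · have hd : dist h 0 < δ' := by
        rw [Real.dist_eq, sub_zero]
        calc |h| ≤ δ := hh
          _ < δ' := by rw [hδdef]; linarith
      have h1 := hδ' hd (by simpa using hne)
      have hh2 : (0:ℝ) < h ^ 2 := by positivity
      rw [lt_div_iff₀ hh2] at h1
      linarith
  -- extract m
  obtain ⟨M₁, hM₁⟩ := eventually_atTop.mp (hUtop.eventually_ge_atTop 1)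
  obtain ⟨M₂, hM₂⟩ := eventually_atBot.mp (hUbot.eventually_ge_atTop 1)
  set K : Set ℝ := Set.Icc (min M₂ (zstar - δ)) (max M₁ (zstar + δ)) ∩ {z | δ ≤ |z - zstar|}
    with hKdef
  have hKc : IsCompact K :=
    isCompact_Icc.inter_right
      (isClosed_le continuous_const ((continuous_id.sub continuous_const).abs))
  have hKne : K.Nonempty := by
    refine ⟨zstar + δ, ⟨⟨?_, le_max_right _ _⟩, ?_⟩⟩
    · exact (min_le_right _ _).trans (by linarith)
    · simp only [Set.mem_setOf_eq, add_sub_cancel_left, abs_of_nonneg hδ.le, le_refl]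
  obtain ⟨z₀, hz₀K, hz₀min⟩ := hKc.exists_isMinOn hKne hcont.continuousOn
  have hz₀ : z₀ ≠ zstar := by
    intro hc
    have h2 := hz₀K.2
    rw [hc] at h2
    simp only [Set.mem_setOf_eq, sub_self, abs_zero] at h2
    linarith
  set m : ℝ := min (U z₀) 1 with hmdef
  have hm : 0 < m := lt_min (hmin _ hz₀) one_pos
  have houter : ∀ z : ℝ, δ ≤ |z - zstar| → m ≤ U z := by
    intro z hz
    by_cases hzK : z ∈ Set.Icc (min M₂ (zstar - δ)) (max M₁ (zstar + δ))
    · exact (min_le_left _ _).trans (hz₀min ⟨hzK, hz⟩)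
    · rw [Set.mem_Icc, not_and_or] at hzK
      push_neg at hzK
      have h1 : 1 ≤ U z := by
        rcases hzK with h | h
        · exact hM₂ z ((le_of_lt h).trans (min_le_left _ _))
        · exact hM₁ z ((le_max_left M₁ (zstar + δ)).trans h.le)
      exact (min_le_right _ _).trans h1
  -- the set S and its complement property
  set S : Set ℝ := {z : ℝ | |z - zstar| ≤ δ} with hSdef
  have hSm : MeasurableSet S :=
    (isClosed_le ((continuous_id.sub continuous_const).abs) continuous_const).measurableSet
  have houterS : ∀ z ∉ S, m ≤ U z := by
    intro z hz
    refine houter z ?_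
    simp only [hSdef, Set.mem_setOf_eq, not_le] at hz
    exact hz.le
  -- integrability facts
  have hwle2 : ∀ z : ℝ, (z - zstar) ^ 2 ≤ 2 * (1 + zstar ^ 2) * (1 + z ^ 2) := by
    intro z
    nlinarith [sq_nonneg (z + zstar), sq_nonneg (z * zstar), sq_nonneg z, sq_nonneg zstar]
  have hC2int : Integrable (fun z : ℝ => (z - zstar) ^ 2 * Real.exp (-U z)) := by
    refine (hint.const_mul (2 * (1 + zstar ^ 2))).mono' ?_ ?_
    · exact (((continuous_id.sub continuous_const).pow 2).mul
        (Real.continuous_exp.comp hcont.neg)).aestronglyMeasurable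
    · refine Eventually.of_forall fun z => ?_
      rw [Real.norm_eq_abs, abs_of_nonneg (by positivity)]
      calc (z - zstar) ^ 2 * Real.exp (-U z)
          ≤ 2 * (1 + zstar ^ 2) * (1 + z ^ 2) * Real.exp (-U z) :=
            mul_le_mul_of_nonneg_right (hwle2 z) (Real.exp_nonneg _)
        _ = 2 * (1 + zstar ^ 2) * ((1 + z ^ 2) * Real.exp (-U z)) := by ring
  have hC0int : Integrable (fun z : ℝ => Real.exp (-U z)) := by
    refine hint.mono' (Real.continuous_exp.comp hcont.neg).aestronglyMeasurable
      (Eventually.of_forall fun z => ?_)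
    rw [Real.norm_eq_abs, abs_of_nonneg (Real.exp_nonneg _)]
    nlinarith [Real.exp_nonneg (-U z), sq_nonneg z,
      mul_nonneg (sq_nonneg z) (Real.exp_nonneg (-U z))]
  have hexpmono : ∀ ε ∈ Set.Ioc (0:ℝ) 1, ∀ z : ℝ,
      Real.exp (-U z / ε) ≤ Real.exp (-U z) := by
    intro ε hε z
    rw [Real.exp_le_exp, neg_div]
    apply neg_le_neg
    rw [le_div_iff₀ hε.1]
    exact mul_le_of_le_one_right (hUnn z) hε.2
  have hI2 : ∀ ε ∈ Set.Ioc (0:ℝ) 1,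
      Integrable (fun z : ℝ => (z - zstar) ^ 2 * Real.exp (-U z / ε)) := by
    intro ε hε
    refine hC2int.mono' ?_ (Eventually.of_forall fun z => ?_)
    · exact (((continuous_id.sub continuous_const).pow 2).mul
        (Real.continuous_exp.comp (hcont.neg.div_const ε))).aestronglyMeasurable
    · rw [Real.norm_eq_abs, abs_of_nonneg (by positivity)]
      exact mul_le_mul_of_nonneg_left (hexpmono ε hε z) (sq_nonneg _)
  have hI0 : ∀ ε ∈ Set.Ioc (0:ℝ) 1,
      Integrable (fun z : ℝ => Real.exp (-U z / ε)) := by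
    intro ε hε
    refine hC0int.mono' (Real.continuous_exp.comp
      (hcont.neg.div_const ε)).aestronglyMeasurable (Eventually.of_forall fun z => ?_)
    rw [Real.norm_eq_abs, abs_of_nonneg (Real.exp_nonneg _)]
    exact hexpmono ε hε z
  -- DCT limits
  have hA2 : Tendsto (fun ε : ℝ => ∫ y : ℝ,
      ({y : ℝ | |Real.sqrt ε * y| ≤ δ}.indicator
        (fun y => y ^ 2 * Real.exp (-U (Real.sqrt ε * y + zstar) / ε))) y)
      (nhdsWithin 0 (Set.Ioi 0))
      (nhds (∫ y : ℝ, y ^ 2 * Real.exp (-(a / 2) * y ^ 2))) := by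
    have hPint : Integrable (fun y : ℝ => y ^ 2 * Real.exp (-(a / 4) * y ^ 2)) := by
      have h := integrable_rpow_mul_exp_neg_mul_sq
        (show (0:ℝ) < a / 4 by linarith) (show (-1:ℝ) < 2 by norm_num)
      refine h.congr (Eventually.of_forall fun y => ?_)
      show y ^ (2:ℝ) * Real.exp (-(a / 4) * y ^ 2) = y ^ (2:ℕ) * Real.exp (-(a / 4) * y ^ 2)
      rw [show ((2:ℝ)) = ((2:ℕ):ℝ) by norm_num, Real.rpow_natCast]
    exact dct18 U hcont hU zstar hUz hd0 ha δ hδ hquad (fun y => y ^ 2)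
      (continuous_pow 2) (fun y => sq_nonneg y) hPint
  have hA0 : Tendsto (fun ε : ℝ => ∫ y : ℝ,
      ({y : ℝ | |Real.sqrt ε * y| ≤ δ}.indicator
        (fun y => (1:ℝ) * Real.exp (-U (Real.sqrt ε * y + zstar) / ε))) y)
      (nhdsWithin 0 (Set.Ioi 0))
      (nhds (∫ y : ℝ, (1:ℝ) * Real.exp (-(a / 2) * y ^ 2))) := by
    have hPint : Integrable (fun y : ℝ => (1:ℝ) * Real.exp (-(a / 4) * y ^ 2)) := by
      refine (integrable_exp_neg_mul_sq (show (0:ℝ) < a / 4 by linarith)).congr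
        (Eventually.of_forall fun y => (one_mul _).symm)
    exact dct18 U hcont hU zstar hUz hd0 ha δ hδ hquad (fun _ => (1:ℝ))
      continuous_const (fun _ => zero_le_one) hPint
  have hI0pos : 0 < ∫ y : ℝ, (1:ℝ) * Real.exp (-(a / 2) * y ^ 2) := by
    have h1 : (∫ y : ℝ, (1:ℝ) * Real.exp (-(a / 2) * y ^ 2))
        = ∫ y : ℝ, Real.exp (-(a / 2) * y ^ 2) := by simp
    rw [h1, integral_gaussian]
    exact Real.sqrt_pos.mpr (div_pos Real.pi_pos (by linarith))
  -- tails
  have htz2 : Tendsto (fun ε : ℝ =>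
      (∫ z in Sᶜ, (z - zstar) ^ 2 * Real.exp (-U z / ε)) / (ε * Real.sqrt ε))
      (nhdsWithin 0 (Set.Ioi 0)) (nhds 0) := by
    apply squeeze18 _ _ m (Real.exp m * ∫ z : ℝ, (z - zstar) ^ 2 * Real.exp (-U z)) hm
    filter_upwards [Ioc_mem_nhdsGT_of_mem
      (show (0:ℝ) ∈ Set.Ico (0:ℝ) 1 from ⟨le_refl 0, one_pos⟩)] with ε hε
    have hεpos : (0:ℝ) < ε := hε.1
    refine ⟨setIntegral_nonneg hSm.compl (fun z _ => by positivity),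
      tail18 U (fun z => (z - zstar) ^ 2) hUnn (fun z => sq_nonneg _) S hSm m hm houterS
        hC2int ε hε (hI2 ε hε), ?_, mul_pos hεpos (Real.sqrt_pos.mpr hεpos)⟩
    have h7 : ε ≤ Real.sqrt ε := by
      have h8 : Real.sqrt (ε ^ 2) ≤ Real.sqrt ε := Real.sqrt_le_sqrt (by nlinarith [hε.2])
      rwa [Real.sqrt_sq hεpos.le] at h8
    nlinarith [Real.sqrt_nonneg ε]
  have htz0 : Tendsto (fun ε : ℝ =>
      (∫ z in Sᶜ, Real.exp (-U z / ε)) / Real.sqrt ε)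
      (nhdsWithin 0 (Set.Ioi 0)) (nhds 0) := by
    apply squeeze18 _ _ m (Real.exp m * ∫ z : ℝ, Real.exp (-U z)) hm
    filter_upwards [Ioc_mem_nhdsGT_of_mem
      (show (0:ℝ) ∈ Set.Ico (0:ℝ) 1 from ⟨le_refl 0, one_pos⟩)] with ε hε
    have hεpos : (0:ℝ) < ε := hε.1
    have htb := tail18 U (fun _ => (1:ℝ)) hUnn (fun _ => zero_le_one) S hSm m hm houterS
      (hC0int.congr (Eventually.of_forall fun z => (one_mul _).symm)) ε hε
      ((hI0 ε hε).congr (Eventually.of_forall fun z => (one_mul _).symm))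
    simp only [one_mul] at htb
    refine ⟨setIntegral_nonneg hSm.compl (fun z _ => Real.exp_nonneg _), htb, ?_,
      Real.sqrt_pos.mpr hεpos⟩
    have h7 : ε ≤ Real.sqrt ε := by
      have h8 : Real.sqrt (ε ^ 2) ≤ Real.sqrt ε := Real.sqrt_le_sqrt (by nlinarith [hε.2])
      rwa [Real.sqrt_sq hεpos.le] at h8
    nlinarith [hε.2]
  -- final combination
  have hfin := (hA2.add htz2).div (hA0.add htz0) (by rw [add_zero]; exact hI0pos.ne')
  have hLval : ((∫ y : ℝ, y ^ 2 * Real.exp (-(a / 2) * y ^ 2)) + 0) /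
      ((∫ y : ℝ, (1:ℝ) * Real.exp (-(a / 2) * y ^ 2)) + 0) = 1 / a := by
    rw [add_zero, add_zero]
    have h1 : (∫ y : ℝ, (1:ℝ) * Real.exp (-(a / 2) * y ^ 2))
        = ∫ y : ℝ, Real.exp (-(a / 2) * y ^ 2) := by simp
    have h2 : (∫ y : ℝ, Real.exp (-(a / 2) * y ^ 2)) ≠ 0 := by
      rw [← h1]; exact hI0pos.ne'
    rw [h1, gauss18 a ha, mul_div_assoc, div_self h2, mul_one]
  rw [← hLval]
  refine hfin.congr' ?_
  filter_upwards [Ioc_mem_nhdsGT_of_mem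
    (show (0:ℝ) ∈ Set.Ico (0:ℝ) 1 from ⟨le_refl 0, one_pos⟩)] with ε hε
  have hεpos : (0:ℝ) < ε := hε.1
  have hs : (0:ℝ) < Real.sqrt ε := Real.sqrt_pos.mpr hεpos
  have hsplit2 : (∫ z : ℝ, (z - zstar) ^ 2 * Real.exp (-U z / ε)) =
      (∫ z in S, (z - zstar) ^ 2 * Real.exp (-U z / ε))
        + ∫ z in Sᶜ, (z - zstar) ^ 2 * Real.exp (-U z / ε) :=
    (integral_add_compl hSm (hI2 ε hε)).symm
  have hsplit0 : (∫ z : ℝ, Real.exp (-U z / ε)) =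
      (∫ z in S, Real.exp (-U z / ε)) + ∫ z in Sᶜ, Real.exp (-U z / ε) :=
    (integral_add_compl hSm (hI0 ε hε)).symm
  have hcov2 : (∫ z in S, (z - zstar) ^ 2 * Real.exp (-U z / ε)) =
      ε * Real.sqrt ε * ∫ y : ℝ,
        ({y : ℝ | |Real.sqrt ε * y| ≤ δ}.indicator
          (fun y => y ^ 2 * Real.exp (-U (Real.sqrt ε * y + zstar) / ε))) y := by
    rw [hSdef, covS18 (fun z => (z - zstar) ^ 2 * Real.exp (-U z / ε)) zstar δ ε hεpos]
    have hptw : ∀ y : ℝ, ({y : ℝ | |Real.sqrt ε * y| ≤ δ}.indicator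
        (fun y => (Real.sqrt ε * y + zstar - zstar) ^ 2
          * Real.exp (-U (Real.sqrt ε * y + zstar) / ε))) y
        = ε * ({y : ℝ | |Real.sqrt ε * y| ≤ δ}.indicator
            (fun y => y ^ 2 * Real.exp (-U (Real.sqrt ε * y + zstar) / ε))) y := by
      intro y
      rw [Set.indicator_apply, Set.indicator_apply]
      split_ifs with hcond
      · rw [add_sub_cancel_right, mul_pow, Real.sq_sqrt hεpos.le]; ring
      · rw [mul_zero]
    rw [integral_congr_ae (Eventually.of_forall hptw), MeasureTheory.integral_const_mul]
    ring
  have hcov0 : (∫ z in S, Real.exp (-U z / ε)) =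
      Real.sqrt ε * ∫ y : ℝ,
        ({y : ℝ | |Real.sqrt ε * y| ≤ δ}.indicator
          (fun y => (1:ℝ) * Real.exp (-U (Real.sqrt ε * y + zstar) / ε))) y := by
    rw [hSdef, covS18 (fun z => Real.exp (-U z / ε)) zstar δ ε hεpos]
    congr 1
    refine integral_congr_ae (Eventually.of_forall fun y => ?_)
    simp [Set.indicator_apply]
  rw [hsplit2, hsplit0, hcov2, hcov0]
  exact alg18 _ _ _ _ ε (Real.sqrt ε) hεpos hs

lemma alg18b (N D k ε : ℝ) (hk : k ≠ 0) : N / (ε * D) = (N * k) / (ε * (D * k)) := by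
  rw [show ε * (D * k) = (ε * D) * k by ring, mul_div_mul_right _ _ hk]

/-- Laplace-method asymptotics for the rescaled variance: if `U` is `C²` with a unique
nondegenerate global minimum at `z*`, tends to `+∞` at `±∞`, and
`(1 + z²) e^{-U(z)}` is integrable, then
`(∫ (z - z*)² e^{-U(z)/ε} dz) / (ε ∫ e^{-U(z)/ε} dz) → 1/U''(z*)` as `ε → 0⁺`. -/
theorem stmt18 (U : ℝ → ℝ) (hcont : Continuous U) (hU : ContDiff ℝ 2 U) (zstar : ℝ)
    (hU'' : 0 < deriv (deriv U) zstar)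
    (hmin : ∀ z : ℝ, z ≠ zstar → U zstar < U z)
    (hUtop : Filter.Tendsto U Filter.atTop Filter.atTop)
    (hUbot : Filter.Tendsto U Filter.atBot Filter.atTop)
    (hint : Integrable (fun z : ℝ => (1 + z ^ 2) * Real.exp (-U z))) :
    Filter.Tendsto (fun ε : ℝ =>
        (∫ z : ℝ, (z - zstar) ^ 2 * Real.exp (-U z / ε)) /
          (ε * ∫ z : ℝ, Real.exp (-U z / ε)))
      (nhdsWithin 0 (Set.Ioi 0)) (nhds (1 / deriv (deriv U) zstar)) := by
  set c := U zstar with hcdef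
  set V : ℝ → ℝ := fun z => U z - c with hVdef
  have hVcont : Continuous V := hcont.sub continuous_const
  have hVC : ContDiff ℝ 2 V := hU.sub contDiff_const
  have hderiv : deriv V = deriv U := by
    funext z
    rw [hVdef]
    exact deriv_sub_const c
  have hderiv2 : deriv (deriv V) zstar = deriv (deriv U) zstar := by rw [hderiv]
  have hVint : Integrable (fun z : ℝ => (1 + z ^ 2) * Real.exp (-V z)) := by
    have h1 : Integrable (fun z : ℝ => ((1 + z ^ 2) * Real.exp (-U z)) * Real.exp c) :=
      hint.mul_const _
    refine h1.congr (Eventually.of_forall fun z => ?_)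
    simp only [hVdef]
    rw [mul_assoc, ← Real.exp_add]
    congr 2
    ring
  have htop' : Tendsto V atTop atTop := by
    have h1 := tendsto_atTop_add_const_right atTop (-c) hUtop
    exact h1.congr fun z => by rw [hVdef]; ring
  have hbot' : Tendsto V atBot atTop := by
    have h1 := tendsto_atTop_add_const_right atBot (-c) hUbot
    exact h1.congr fun z => by rw [hVdef]; ring
  have haux := aux18 V hVcont hVC zstar (by rw [hderiv2]; exact hU'')
    (fun z hz => sub_pos.mpr (hmin z hz)) (by rw [hVdef]; simp [hcdef])
    htop' hbot' hVint
  rw [hderiv2] at haux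
  refine haux.congr' ?_
  filter_upwards [self_mem_nhdsWithin] with ε hε
  have hεpos : (0:ℝ) < ε := hε
  have hk : Real.exp (-c / ε) ≠ 0 := (Real.exp_pos _).ne'
  have hexpand : ∀ z : ℝ, Real.exp (-U z / ε) = Real.exp (-V z / ε) * Real.exp (-c / ε) := by
    intro z
    rw [← Real.exp_add]
    congr 1
    rw [hVdef]
    ring
  have e2 : (∫ z : ℝ, (z - zstar) ^ 2 * Real.exp (-U z / ε)) =
      (∫ z : ℝ, (z - zstar) ^ 2 * Real.exp (-V z / ε)) * Real.exp (-c / ε) := by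
    rw [← MeasureTheory.integral_mul_const]
    refine integral_congr_ae (Eventually.of_forall fun z => ?_)
    simp only []
    rw [hexpand z, mul_assoc]
  have e0 : (∫ z : ℝ, Real.exp (-U z / ε)) =
      (∫ z : ℝ, Real.exp (-V z / ε)) * Real.exp (-c / ε) := by
    rw [← MeasureTheory.integral_mul_const]
    refine integral_congr_ae (Eventually.of_forall fun z => ?_)
    simp only []
    exact hexpand z
  rw [e2, e0]
  exact alg18b _ _ _ ε hk
end
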